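/- arXiv:2309.16533 — 3 statements merged into one kernel-verified Lean document; each statement's English description precedes it below -/
import Mathlib

section
/- For every finite simple connected graph G, the pathwidth and the monotone hunter number satisfy pw(G) ≤ mh(G) ≤ pw(G) + 1. -/
open SimpleGraph

namespace HuntersRabbit

universe u

variable {V : Type u}

/-- `shots S i` is the set `S_{i+1}` shot at (paper, 1-indexed) round `i+1`. -/
def shots (S : List (Finset V)) (i : ℕ) : Finset V := S.getD i ∅

/-- A hunter strategy is a finite sequence of nonempty subsets of vertices. -/
def ValidStrategy (S : List (Finset V)) : Prop := ∀ s ∈ S, s.Nonempty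

/-- The hunter strategy `S` uses at most `k` hunters. -/
def Uses (S : List (Finset V)) (k : ℕ) : Prop := ∀ s ∈ S, s.card ≤ k

/-- A rabbit trajectory of length `ℓ` starting from `W`: a walk `r 0, r 1, …, r ℓ`
with `r 0 ∈ W` (only the values at `0, …, ℓ` are relevant). -/
def Trajectory (G : SimpleGraph V) (W : Set V) (ℓ : ℕ) (r : ℕ → V) : Prop :=
  r 0 ∈ W ∧ ∀ i, i < ℓ → G.Adj (r i) (r (i + 1))

/-- The hunter strategy `S = (S_1, …, S_ℓ)` is winning with respect to `W`:
every rabbit trajectory `(r_0, …, r_ℓ)` starting from `W` satisfies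
`r_j ∈ S_{j+1}` for some `0 ≤ j < ℓ`. -/
def IsWinning (G : SimpleGraph V) (W : Set V) (S : List (Finset V)) : Prop :=
  ∀ r : ℕ → V, Trajectory G W S.length r → ∃ j, j < S.length ∧ r j ∈ shots S j

/-- The contaminated sets: `Zset G W S 0 = W` and
`Zset G W S (i+1) = {x | ∃ y ∈ Zset G W S i \ S_{i+1}, y ~ x}`. -/
def Zset (G : SimpleGraph V) (W : Set V) (S : List (Finset V)) : ℕ → Set V
  | 0 => W
  | i + 1 => {x | ∃ y ∈ Zset G W S i, y ∉ shots S i ∧ G.Adj y x}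

/-- `v` is cleared at (paper) round `i+1`: either `v ∈ S_{i+1}`, or
`N(v) ∩ Z_i` is nonempty and contained in `S_{i+1}`. -/
def ClearedAt (G : SimpleGraph V) (W : Set V) (S : List (Finset V)) (v : V) (i : ℕ) : Prop :=
  v ∈ shots S i ∨
    ((G.neighborSet v ∩ Zset G W S i).Nonempty ∧
      G.neighborSet v ∩ Zset G W S i ⊆ ↑(shots S i))

/-- The strategy is monotone: whenever `v` is cleared at some round and `v ∈ Z_j`
for some later (or equal) round `j`, then `v ∈ S_{j+1}`. -/
def IsMonotoneStrat (G : SimpleGraph V) (W : Set V) (S : List (Finset V)) : Prop :=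
  ∀ v : V, ∀ i j : ℕ, i < S.length → i < j → j < S.length →
    ClearedAt G W S v i → v ∈ Zset G W S j → v ∈ shots S j

/-- The hunter number `h_W(G)`: the minimum `k` such that some winning hunter
strategy with respect to `W` uses `k` hunters (with the convention that it is `0`
for a one-vertex graph). -/
noncomputable def hunterNumW (G : SimpleGraph V) (W : Set V) : ℕ :=
  if Nat.card V = 1 then 0
  else sInf {k | ∃ S : List (Finset V), ValidStrategy S ∧ IsWinning G W S ∧ Uses S k}

/-- The hunter number `h(G) = h_V(G)`. -/
noncomputable def hunterNum (G : SimpleGraph V) : ℕ := hunterNumW G Set.univ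

/-- The monotone hunter number `mh_W(G)`. -/
noncomputable def mhunterNumW (G : SimpleGraph V) (W : Set V) : ℕ :=
  if Nat.card V = 1 then 0
  else sInf {k | ∃ S : List (Finset V),
    ValidStrategy S ∧ IsWinning G W S ∧ IsMonotoneStrat G W S ∧ Uses S k}

/-- The monotone hunter number `mh(G) = mh_V(G)`. -/
noncomputable def mhunterNum (G : SimpleGraph V) : ℕ := mhunterNumW G Set.univ

/-- `B` is a path-decomposition of `G`: the bags cover all vertices, every edge
lies in some bag, and `X_i ∩ X_q ⊆ X_j` whenever `i ≤ j ≤ q`. -/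
structure IsPathDecomp (G : SimpleGraph V) (B : List (Finset V)) : Prop where
  covers : ∀ v : V, ∃ X ∈ B, v ∈ X
  edges : ∀ u v : V, G.Adj u v → ∃ X ∈ B, u ∈ X ∧ v ∈ X
  inter : ∀ i j q : ℕ, i ≤ j → j ≤ q → q < B.length →
    ∀ v : V, v ∈ B.getD i ∅ → v ∈ B.getD q ∅ → v ∈ B.getD j ∅

/-- The pathwidth of `G`: the minimum, over path-decompositions, of the
maximum bag size minus one. -/
noncomputable def pathwidth (G : SimpleGraph V) : ℕ :=
  sInf {w | ∃ B : List (Finset V), IsPathDecomp G B ∧ ∀ X ∈ B, X.card ≤ w + 1}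

/-! ### general lemmas -/

section General
variable {G : SimpleGraph V} {W : Set V} {S : List (Finset V)}

lemma trajectory_mem_Zset {r : ℕ → V} (hr0 : r 0 ∈ W)
    (hadj : ∀ i, i < S.length → G.Adj (r i) (r (i + 1)))
    (havoid : ∀ j, j < S.length → r j ∉ shots S j) :
    ∀ i, i ≤ S.length → r i ∈ Zset G W S i := by
  intro i
  induction i with
  | zero => intro _; exact hr0
  | succ n ih =>
    intro hn
    have hlt : n < S.length := Nat.lt_of_succ_le hn
    exact ⟨r n, ih hlt.le, havoid n hlt, hadj n hlt⟩

lemma isWinning_of_Zset_empty (h : Zset G W S S.length = ∅) : IsWinning G W S := by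
  intro r hr
  by_contra hc
  push_neg at hc
  have := trajectory_mem_Zset hr.1 hr.2 hc S.length le_rfl
  rw [h] at this
  exact this

lemma exists_traj_of_mem_Zset :
    ∀ m, ∀ x ∈ Zset G W S m, ∃ r : ℕ → V, r 0 ∈ W ∧
      (∀ i, i < m → G.Adj (r i) (r (i + 1))) ∧ (∀ i, i < m → r i ∉ shots S i) ∧ r m = x := by
  intro m
  induction m with
  | zero => intro x hx; exact ⟨fun _ => x, hx, fun i hi => absurd hi (by omega), fun i hi => absurd hi (by omega), rfl⟩
  | succ n ih =>
    rintro x ⟨y, hyZ, hyS, hadj⟩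
    obtain ⟨r', h0, hadj', havoid', hend⟩ := ih y hyZ
    refine ⟨fun i => if i ≤ n then r' i else x, by simpa using h0, ?_, ?_, by simp⟩
    · intro i hi
      rcases Nat.lt_or_ge i n with h | h
      · have h2 : i + 1 ≤ n := h
        simpa [h.le, h2] using hadj' i h
      · have hin : i = n := by omega
        subst hin
        simpa [hend] using hadj
    · intro i hi
      have hin : i ≤ n := by omega
      rcases Nat.lt_or_ge i n with h | h
      · simpa [hin] using havoid' i h
      · have : i = n := by omega
        subst this
        simpa [hend] using hyS

lemma Zset_empty_of_isWinning (hW : W.Nonempty) (h : IsWinning G W S) :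
    Zset G W S S.length = ∅ := by
  by_contra hne
  rw [← Set.not_nonempty_iff_eq_empty, not_not] at hne
  obtain ⟨x, hx⟩ := hne
  obtain ⟨r, h0, hadj, havoid, _⟩ := exists_traj_of_mem_Zset S.length x hx
  obtain ⟨j, hj, hjS⟩ := h r ⟨h0, hadj⟩
  exact havoid j hj hjS

lemma Zset_empty_mono {m n : ℕ} (hmn : m ≤ n) (h : Zset G W S m = ∅) :
    Zset G W S n = ∅ := by
  induction n with
  | zero => exact Nat.le_zero.mp hmn ▸ h
  | succ k ih =>
    rcases Nat.lt_or_ge m (k+1) with hlt | hge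
    · have hk := ih (by omega)
      ext x
      simp only [Set.mem_empty_iff_false, iff_false]
      rintro ⟨y, hy, -⟩
      rw [hk] at hy
      exact hy
    · have : m = k + 1 := by omega
      exact this ▸ h

end General

/-! ### Part A : the bag strategy -/

section PartA
variable {G : SimpleGraph V} {B : List (Finset V)}

lemma getD_mem_of_lt {L : List (Finset V)} {n : ℕ} (h : n < L.length) :
    L.getD n ∅ ∈ L := by
  rw [List.getD_eq_getElem _ _ h]
  exact List.getElem_mem h

lemma mem_getD_of_mem {X : Finset V} (hX : X ∈ B) {v : V} (hv : v ∈ X) :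
    ∃ n, n < B.length ∧ v ∈ B.getD n ∅ := by
  obtain ⟨n, hn, rfl⟩ := List.getElem_of_mem hX
  exact ⟨n, hn, by rw [List.getD_eq_getElem _ _ hn]; exact hv⟩

lemma Zset_subset_future (hB : IsPathDecomp G B) :
    ∀ i, ∀ x ∈ Zset G Set.univ B i, ∃ m, i ≤ m ∧ m < B.length ∧ x ∈ B.getD m ∅ := by
  intro i
  induction i with
  | zero =>
    intro x _
    obtain ⟨X, hXB, hxX⟩ := hB.covers x
    obtain ⟨n, hn, hx⟩ := mem_getD_of_mem hXB hxX
    exact ⟨n, Nat.zero_le _, hn, hx⟩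
  | succ i ih =>
    rintro x ⟨y, hyZ, hyS, hadj⟩
    obtain ⟨m, him, hmlen, hym⟩ := ih y hyZ
    obtain ⟨X, hXB, hyX, hxX⟩ := hB.edges y x hadj
    obtain ⟨t, htlen, hXt⟩ := List.getElem_of_mem hXB
    have hgt : B.getD t ∅ = X := by rw [List.getD_eq_getElem _ _ htlen, hXt]
    rcases Nat.lt_or_ge t i.succ with ht | ht
    · exfalso
      exact hyS (hB.inter t i m (by omega) him hmlen y (hgt ▸ hyX) hym)
    · exact ⟨t, ht, htlen, hgt ▸ hxX⟩

lemma Zset_length_empty (hB : IsPathDecomp G B) :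
    Zset G Set.univ B B.length = ∅ := by
  ext x
  simp only [Set.mem_empty_iff_false, iff_false]
  intro hx
  obtain ⟨m, hm, hmlen, -⟩ := Zset_subset_future hB B.length x hx
  omega

lemma phantom (hB : IsPathDecomp G B) :
    ∀ j, ∀ w ∈ Zset G Set.univ B j, (∀ m, m ≤ j → w ∉ B.getD m ∅) →
      ∀ t, t ≤ j → w ∈ Zset G Set.univ B t := by
  intro j
  induction j with
  | zero =>
    intro w hw _ t ht
    exact (Nat.le_zero.mp ht) ▸ hw
  | succ j ih =>
    rintro w ⟨z, hzZ, hzS, hadj⟩ hph t ht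
    have hzph : ∀ m, m ≤ j → z ∉ B.getD m ∅ := by
      intro m hm hmem
      obtain ⟨X, hXB, hzX, hwX⟩ := hB.edges z w hadj
      obtain ⟨t₀, ht₀len, hXt₀⟩ := List.getElem_of_mem hXB
      have hgt : B.getD t₀ ∅ = X := by rw [List.getD_eq_getElem _ _ ht₀len, hXt₀]
      have ht₀ : j + 1 < t₀ := by
        by_contra hc
        exact hph t₀ (by omega) (hgt ▸ hwX)
      exact hzS (hB.inter m j t₀ hm (by omega) ht₀len z hmem (hgt ▸ hzX))
    rcases Nat.eq_zero_or_pos t with rfl | htpos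
    · exact Set.mem_univ w
    · obtain ⟨t', rfl⟩ : ∃ t', t = t' + 1 := ⟨t - 1, by omega⟩
      exact ⟨z, ih z hzZ hzph t' (by omega), hzph t' (by omega), hadj⟩

lemma bag_monotone (hB : IsPathDecomp G B) : IsMonotoneStrat G Set.univ B := by
  intro v i j hi hij hj hcl hvZ
  by_cases hfirst : ∃ t, t ≤ j ∧ v ∈ B.getD t ∅
  · obtain ⟨t, htj, hvt⟩ := hfirst
    obtain ⟨m, hjm, hm, hvm⟩ := Zset_subset_future hB j v hvZ
    exact hB.inter t j m htj hjm hm v hvt hvm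
  · push_neg at hfirst
    exfalso
    rcases hcl with hvS | ⟨⟨u, hu⟩, hsub⟩
    · exact hfirst i hij.le hvS
    · obtain ⟨j', rfl⟩ : ∃ j', j = j' + 1 := ⟨j - 1, by omega⟩
      obtain ⟨y, hyZ, hyS, hadj⟩ := hvZ
      have hyph : ∀ m, m ≤ j' → y ∉ B.getD m ∅ := by
        intro m hm hmem
        obtain ⟨X, hXB, hyX, hvX⟩ := hB.edges y v hadj
        obtain ⟨t₀, ht₀len, hXt₀⟩ := List.getElem_of_mem hXB
        have hgt : B.getD t₀ ∅ = X := by rw [List.getD_eq_getElem _ _ ht₀len, hXt₀]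
        have ht₀ : j' + 1 < t₀ := by
          by_contra hc
          exact hfirst t₀ (by omega) (hgt ▸ hvX)
        exact hyS (hB.inter m j' t₀ hm (by omega) ht₀len y hmem (hgt ▸ hyX))
      have hyZi : y ∈ Zset G Set.univ B i := phantom hB j' y hyZ hyph i (by omega)
      have hyN : y ∈ G.neighborSet v ∩ Zset G Set.univ B i := ⟨hadj.symm, hyZi⟩
      exact hyph i (by omega) (hsub hyN)

/-- filtering the empty bags out of a path-decomposition -/
lemma isPathDecomp_filter (hB : IsPathDecomp G B) :
    IsPathDecomp G (B.filter (fun X => decide X.Nonempty)) := by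
  constructor
  · intro v
    obtain ⟨X, hXB, hvX⟩ := hB.covers v
    exact ⟨X, List.mem_filter.mpr ⟨hXB, by simp; exact ⟨v, hvX⟩⟩, hvX⟩
  · intro u v huv
    obtain ⟨X, hXB, huX, hvX⟩ := hB.edges u v huv
    exact ⟨X, List.mem_filter.mpr ⟨hXB, by simp; exact ⟨u, huX⟩⟩, huX, hvX⟩
  · intro i j q hij hjq hq v hvi hvq
    have hsub : List.Sublist (B.filter (fun X => decide X.Nonempty)) B := List.filter_sublist
    obtain ⟨f, hf⟩ := List.sublist_iff_exists_orderEmbedding_getElem?_eq.mp hsub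
    set C := B.filter (fun X => decide X.Nonempty) with hC
    have key : ∀ n, n < C.length → f n < B.length ∧ B.getD (f n) ∅ = C.getD n ∅ := by
      intro n hn
      have h1 : C[n]? = some (C.getD n ∅) := by
        rw [List.getD_eq_getElem _ _ hn, List.getElem?_eq_getElem hn]
      have h2 := (hf n).symm.trans h1
      have hlen : f n < B.length := by
        by_contra hc
        rw [List.getElem?_eq_none (by omega)] at h2
        exact Option.some_ne_none _ h2.symm
      rw [List.getElem?_eq_getElem hlen] at h2
      exact ⟨hlen, by rw [List.getD_eq_getElem _ _ hlen]; exact Option.some.inj h2⟩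
    have hi : i < C.length := by omega
    have hj : j < C.length := by omega
    obtain ⟨hfi, hBi⟩ := key i hi
    obtain ⟨hfj, hBj⟩ := key j hj
    obtain ⟨hfq, hBq⟩ := key q hq
    rw [← hBj]
    exact hB.inter (f i) (f j) (f q) (f.monotone hij) (f.monotone hjq) hfq v
      (by rw [hBi]; exact hvi) (by rw [hBq]; exact hvq)

lemma trivialDecomp [Fintype V] (G : SimpleGraph V) :
    IsPathDecomp G [Finset.univ] := by
  constructor
  · intro v; exact ⟨Finset.univ, List.mem_singleton.mpr rfl, Finset.mem_univ v⟩
  · intro u v _; exact ⟨Finset.univ, List.mem_singleton.mpr rfl, Finset.mem_univ u, Finset.mem_univ v⟩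
  · intro i j q hij hjq hq v hvi _
    have : i = 0 ∧ j = 0 ∧ q = 0 := by simp at hq; omega
    obtain ⟨rfl, rfl, rfl⟩ := this
    exact hvi

lemma pathwidth_set_nonempty [Fintype V] (G : SimpleGraph V) :
    {w | ∃ B : List (Finset V), IsPathDecomp G B ∧ ∀ X ∈ B, X.card ≤ w + 1}.Nonempty := by
  refine ⟨Fintype.card V, [Finset.univ], trivialDecomp G, ?_⟩
  intro X hX
  rw [List.mem_singleton] at hX
  subst hX
  simp

lemma exists_good_decomp [Fintype V] (G : SimpleGraph V) :
    ∃ B : List (Finset V), IsPathDecomp G B ∧ ∀ X ∈ B, X.card ≤ pathwidth G + 1 :=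
  Nat.sInf_mem (pathwidth_set_nonempty G)

lemma mhunterNum_le_pathwidth_add_one [Fintype V] (G : SimpleGraph V) :
    mhunterNum G ≤ pathwidth G + 1 := by
  obtain ⟨B₀, hB₀, hcard⟩ := exists_good_decomp G
  unfold mhunterNum mhunterNumW
  split_ifs with h1
  · omega
  · set B := B₀.filter (fun X => decide X.Nonempty) with hBdef
    have hB : IsPathDecomp G B := isPathDecomp_filter hB₀
    apply Nat.sInf_le
    refine ⟨B, ?_, isWinning_of_Zset_empty (Zset_length_empty hB), bag_monotone hB, ?_⟩
    · intro s hs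
      have := List.of_mem_filter hs
      simpa using this
    · intro s hs
      exact hcard s (List.mem_of_mem_filter hs)

end PartA

/-! ### Part B : from a monotone strategy to a path-decomposition -/

section PartB
variable {G : SimpleGraph V} {S : List (Finset V)}

/-- rounds at which `v` spreads contamination -/
def sprSet (G : SimpleGraph V) (S : List (Finset V)) (v : V) : Set ℕ :=
  {m | m < S.length ∧ v ∈ Zset G Set.univ S m ∧ v ∉ shots S m}

/-- last round at which `v` is contaminated -/
noncomputable def MvF (G : SimpleGraph V) (S : List (Finset V)) (v : V) : ℕ :=
  sSup {m | v ∈ Zset G Set.univ S m}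

-- start of the bag-interval of `v`
open Classical in
noncomputable def hvF (G : SimpleGraph V) (S : List (Finset V)) (v : V) : ℕ :=
  if (sprSet G S v).Nonempty then sSup (sprSet G S v) + 1 else 0

/-- end of the bag-interval of `v` -/
noncomputable def evF (G : SimpleGraph V) (S : List (Finset V)) (v : V) : ℕ :=
  max (hvF G S v) (MvF G S v)

/-- `v` needs a private bag -/
def IsHomeF (G : SimpleGraph V) (S : List (Finset V)) (v : V) : Prop :=
  (sprSet G S v).Nonempty ∧ MvF G S v ≤ sSup (sprSet G S v)

variable [Nonempty V] [Fintype V]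

lemma mem_Zset_lt_length (hwin : IsWinning G Set.univ S) {v : V} {m : ℕ}
    (hv : v ∈ Zset G Set.univ S m) : m < S.length := by
  by_contra hc
  have : Zset G Set.univ S m = ∅ :=
    Zset_empty_mono (by omega) (Zset_empty_of_isWinning Set.univ_nonempty hwin)
  rw [this] at hv
  exact hv

lemma length_pos (hwin : IsWinning G Set.univ S) : 0 < S.length := by
  obtain ⟨v⟩ := ‹Nonempty V›
  exact mem_Zset_lt_length hwin (Set.mem_univ v : v ∈ Zset G Set.univ S 0)

/-- spreaders have always been contaminated and were never shot before -/
lemma spreader (hwin : IsWinning G Set.univ S) (hmono : IsMonotoneStrat G Set.univ S) :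
    ∀ m, ∀ v : V, v ∈ Zset G Set.univ S m → v ∉ shots S m →
      ∀ t, t ≤ m → v ∈ Zset G Set.univ S t ∧ v ∉ shots S t := by
  intro m
  induction m with
  | zero =>
    intro v hv hs t ht
    have : t = 0 := by omega
    subst this
    exact ⟨hv, hs⟩
  | succ m ih =>
    intro v hv hs t ht
    have hlen : m + 1 < S.length := mem_Zset_lt_length hwin hv
    have hv' := hv
    obtain ⟨z, hzZ, hzS, hadj⟩ := hv'
    constructor
    · rcases Nat.eq_zero_or_pos t with rfl | htpos
      · exact Set.mem_univ v
      · obtain ⟨t', rfl⟩ : ∃ t', t = t' + 1 := ⟨t - 1, by omega⟩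
        obtain ⟨h1, h2⟩ := ih z hzZ hzS t' (by omega)
        exact ⟨z, h1, h2, hadj⟩
    · rcases Nat.eq_or_lt_of_le ht with rfl | hlt
      · exact hs
      · intro hvs
        exact hs (hmono v t (m+1) (by omega) (by omega) hlen (Or.inl hvs) hv)

/-- contamination times form an initial interval -/
lemma always_contam (hwin : IsWinning G Set.univ S) (hmono : IsMonotoneStrat G Set.univ S)
    {v : V} {m : ℕ} (hv : v ∈ Zset G Set.univ S m) :
    ∀ t, t ≤ m → v ∈ Zset G Set.univ S t := by
  intro t ht
  rcases Nat.eq_zero_or_pos m with rfl | hmpos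
  · have : t = 0 := by omega
    subst this
    exact hv
  · obtain ⟨m', rfl⟩ : ∃ m', m = m' + 1 := ⟨m - 1, by omega⟩
    obtain ⟨z, hzZ, hzS, hadj⟩ := hv
    rcases Nat.eq_zero_or_pos t with rfl | htpos
    · exact Set.mem_univ v
    · obtain ⟨t', rfl⟩ : ∃ t', t = t' + 1 := ⟨t - 1, by omega⟩
      obtain ⟨h1, h2⟩ := spreader hwin hmono m' z hzZ hzS t' (by omega)
      exact ⟨z, h1, h2, hadj⟩

lemma Mv_bddAbove (hwin : IsWinning G Set.univ S) (v : V) :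
    BddAbove {m | v ∈ Zset G Set.univ S m} :=
  ⟨S.length, fun m hm => (mem_Zset_lt_length hwin hm).le⟩

lemma mem_Zset_MvF (hwin : IsWinning G Set.univ S) (v : V) :
    v ∈ Zset G Set.univ S (MvF G S v) :=
  Nat.sSup_mem ⟨0, Set.mem_univ v⟩ (Mv_bddAbove hwin v)

lemma MvF_lt (hwin : IsWinning G Set.univ S) (v : V) : MvF G S v < S.length :=
  mem_Zset_lt_length hwin (mem_Zset_MvF hwin v)

lemma le_MvF (hwin : IsWinning G Set.univ S) {v : V} {m : ℕ}
    (hm : v ∈ Zset G Set.univ S m) : m ≤ MvF G S v :=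
  le_csSup (Mv_bddAbove hwin v) hm

lemma spr_bddAbove (v : V) : BddAbove (sprSet G S v) :=
  ⟨S.length, fun m hm => hm.1.le⟩

lemma spr_sSup_mem {v : V} (hne : (sprSet G S v).Nonempty) :
    sSup (sprSet G S v) ∈ sprSet G S v :=
  Nat.sSup_mem hne (spr_bddAbove v)

lemma shot_of_not_spr {v : V} {i : ℕ} (hi : i < S.length)
    (hv : v ∈ Zset G Set.univ S i) (hns : i ∉ sprSet G S v) : v ∈ shots S i := by
  by_contra hc
  exact hns ⟨hi, hv, hc⟩

lemma exists_adj (hG : G.Connected) (hcard : 1 < Fintype.card V) (v : V) :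
    ∃ u, G.Adj v u := by
  obtain ⟨w, hw⟩ := Fintype.exists_ne_of_one_lt_card hcard v
  obtain ⟨p⟩ := hG.preconnected v w
  cases p with
  | nil => exact absurd rfl hw.symm
  | cons h _ => exact ⟨_, h⟩

lemma hvF_lt (hG : G.Connected) (hcard : 1 < Fintype.card V)
    (hwin : IsWinning G Set.univ S) (v : V) : hvF G S v < S.length := by
  unfold hvF
  split_ifs with h
  · obtain ⟨hL1, hL2, hL3⟩ := spr_sSup_mem h
    obtain ⟨u, hu⟩ := exists_adj hG hcard v
    exact mem_Zset_lt_length hwin (⟨v, hL2, hL3, hu⟩ : u ∈ Zset G Set.univ S (sSup (sprSet G S v) + 1))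
  · exact length_pos hwin

lemma adj_hv_le_Mv (hwin : IsWinning G Set.univ S) {u v : V} (hadj : G.Adj u v) :
    hvF G S u ≤ MvF G S v := by
  unfold hvF
  split_ifs with h
  · obtain ⟨hL1, hL2, hL3⟩ := spr_sSup_mem h
    exact le_MvF hwin (⟨u, hL2, hL3, hadj⟩ : v ∈ Zset G Set.univ S (sSup (sprSet G S u) + 1))
  · exact Nat.zero_le _

lemma home_ev {v : V} (hv : IsHomeF G S v) : evF G S v = hvF G S v := by
  have h1 : hvF G S v = sSup (sprSet G S v) + 1 := by unfold hvF; rw [if_pos hv.1]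
  have h2 := hv.2
  unfold evF
  omega

lemma hv_le_ev (v : V) : hvF G S v ≤ evF G S v := le_max_left _ _

lemma Mv_le_ev (v : V) : MvF G S v ≤ evF G S v := le_max_right _ _

lemma not_both_home (hwin : IsWinning G Set.univ S) {u v : V} (hadj : G.Adj u v)
    (hu : IsHomeF G S u) (hv : IsHomeF G S v) : hvF G S u ≠ hvF G S v := by
  intro heq
  have h1 : hvF G S v ≤ MvF G S u := adj_hv_le_Mv hwin hadj.symm
  have h2 : MvF G S u ≤ sSup (sprSet G S u) := hu.2
  have h3 : hvF G S u = sSup (sprSet G S u) + 1 := by unfold hvF; rw [if_pos hu.1]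
  omega

lemma base_subset_shots (hwin : IsWinning G Set.univ S) (hmono : IsMonotoneStrat G Set.univ S)
    {v : V} {i : ℕ} (h1 : hvF G S v ≤ i) (h2 : i ≤ evF G S v)
    (h3 : ¬(IsHomeF G S v ∧ hvF G S v = i)) : v ∈ shots S i := by
  by_cases hspr : (sprSet G S v).Nonempty
  · by_cases hM : MvF G S v ≤ sSup (sprSet G S v)
    · exfalso
      have hev : evF G S v = hvF G S v := home_ev ⟨hspr, hM⟩
      exact h3 ⟨⟨hspr, hM⟩, by omega⟩
    · push_neg at hM
      have hhv : hvF G S v = sSup (sprSet G S v) + 1 := by unfold hvF; rw [if_pos hspr]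
      have hiM : i ≤ MvF G S v := by
        rcases le_max_iff.mp h2 with h | h
        · omega
        · exact h
      have hvZ : v ∈ Zset G Set.univ S i := always_contam hwin hmono (mem_Zset_MvF hwin v) i hiM
      refine shot_of_not_spr (lt_of_le_of_lt hiM (MvF_lt hwin v)) hvZ ?_
      intro hin
      have := le_csSup (spr_bddAbove v) hin
      omega
  · have hhv : hvF G S v = 0 := by unfold hvF; rw [if_neg hspr]
    have hiM : i ≤ MvF G S v := by
      rcases le_max_iff.mp h2 with h | h
      · omega
      · exact h
    have hvZ : v ∈ Zset G Set.univ S i := always_contam hwin hmono (mem_Zset_MvF hwin v) i hiM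
    refine shot_of_not_spr (lt_of_le_of_lt hiM (MvF_lt hwin v)) hvZ ?_
    intro hin
    exact hspr ⟨i, hin⟩

-- the bag at run `i`, position `p`
open Classical in
noncomputable def bagF (G : SimpleGraph V) (S : List (Finset V)) [Fintype V] (i p : ℕ) :
    Finset V :=
  Finset.univ.filter (fun v =>
    (hvF G S v ≤ i ∧ i ≤ evF G S v ∧ ¬(IsHomeF G S v ∧ hvF G S v = i)) ∨
    (IsHomeF G S v ∧ hvF G S v = i ∧ ((Fintype.equivFin V v : ℕ) + 1 = p)))

-- the full bag list
noncomputable def BLF (G : SimpleGraph V) (S : List (Finset V)) [Fintype V] :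
    List (Finset V) :=
  (List.range (S.length * (Fintype.card V + 1))).map
    (fun n => bagF G S (n / (Fintype.card V + 1)) (n % (Fintype.card V + 1)))

lemma nat_div_helper (a b c : ℕ) (hb : b < c) : (a * c + b) / c = a := by
  rw [add_comm, Nat.add_mul_div_right _ _ (by omega : 0 < c), Nat.div_eq_of_lt hb, zero_add]

lemma nat_mod_helper (a b c : ℕ) (hb : b < c) : (a * c + b) % c = b := by
  rw [add_comm, Nat.add_mul_mod_self_right, Nat.mod_eq_of_lt hb]

lemma mem_bagF {v : V} {i p : ℕ} :
    v ∈ bagF G S i p ↔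
      ((hvF G S v ≤ i ∧ i ≤ evF G S v ∧ ¬(IsHomeF G S v ∧ hvF G S v = i)) ∨
       (IsHomeF G S v ∧ hvF G S v = i ∧ ((Fintype.equivFin V v : ℕ) + 1 = p))) := by
  simp [bagF]

lemma BLF_length : (BLF G S).length = S.length * (Fintype.card V + 1) := by
  simp [BLF]

lemma getD_BLF {n : ℕ} (hn : n < S.length * (Fintype.card V + 1)) :
    (BLF G S).getD n ∅ = bagF G S (n / (Fintype.card V + 1)) (n % (Fintype.card V + 1)) := by
  rw [List.getD_eq_getElem _ _ (by rw [BLF_length]; exact hn)]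
  simp [BLF]

lemma mem_BLF_iff {v : V} {n : ℕ} (hn : n < S.length * (Fintype.card V + 1)) :
    v ∈ (BLF G S).getD n ∅ ↔
      ((¬IsHomeF G S v ∧ hvF G S v ≤ n / (Fintype.card V + 1) ∧
          n / (Fintype.card V + 1) ≤ evF G S v) ∨
       (IsHomeF G S v ∧ n = hvF G S v * (Fintype.card V + 1) + ((Fintype.equivFin V v : ℕ) + 1))) := by
  have helt : ((Fintype.equivFin V v : ℕ) + 1) < Fintype.card V + 1 := by
    have := (Fintype.equivFin V v).isLt
    omega
  rw [getD_BLF hn, mem_bagF]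
  constructor
  · rintro (⟨ha, hb, hcc⟩ | ⟨hh, h2, h3⟩)
    · left
      refine ⟨?_, ha, hb⟩
      intro hhome
      have hev : evF G S v = hvF G S v := home_ev hhome
      exact hcc ⟨hhome, by omega⟩
    · right
      refine ⟨hh, ?_⟩
      calc n = (Fintype.card V + 1) * (n / (Fintype.card V + 1)) + n % (Fintype.card V + 1) :=
            (Nat.div_add_mod n _).symm
        _ = (Fintype.card V + 1) * hvF G S v + ((Fintype.equivFin V v : ℕ) + 1) := by
            rw [← h2, ← h3]
        _ = hvF G S v * (Fintype.card V + 1) + ((Fintype.equivFin V v : ℕ) + 1) := by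
            rw [mul_comm]
  · rintro (⟨hnh, ha, hb⟩ | ⟨hh, hn2⟩)
    · exact Or.inl ⟨ha, hb, fun hx => hnh hx.1⟩
    · have hdiv : n / (Fintype.card V + 1) = hvF G S v := by
        rw [hn2, nat_div_helper _ _ _ helt]
      have hmod : n % (Fintype.card V + 1) = (Fintype.equivFin V v : ℕ) + 1 := by
        rw [hn2, nat_mod_helper _ _ _ helt]
      exact Or.inr ⟨hh, hdiv.symm, hmod.symm⟩

lemma BLF_inter (hwin : IsWinning G Set.univ S) :
    ∀ i j q : ℕ, i ≤ j → j ≤ q → q < (BLF G S).length →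
      ∀ v : V, v ∈ (BLF G S).getD i ∅ → v ∈ (BLF G S).getD q ∅ →
        v ∈ (BLF G S).getD j ∅ := by
  intro i j q hij hjq hq v hvi hvq
  rw [BLF_length] at hq
  have hi : i < S.length * (Fintype.card V + 1) := by omega
  have hj : j < S.length * (Fintype.card V + 1) := by omega
  rw [mem_BLF_iff hi] at hvi
  rw [mem_BLF_iff hq] at hvq
  rw [mem_BLF_iff hj]
  rcases hvi with ⟨hnh, ha, hb⟩ | ⟨hh, hn⟩
  · rcases hvq with ⟨-, ha', hb'⟩ | ⟨hh', -⟩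
    · left
      exact ⟨hnh, le_trans ha (Nat.div_le_div_right hij),
        le_trans (Nat.div_le_div_right hjq) hb'⟩
    · exact absurd hh' hnh
  · rcases hvq with ⟨hnh', -, -⟩ | ⟨-, hn'⟩
    · exact absurd hh hnh'
    · have hiq : i = q := by omega
      have hijq : i = j := by omega
      subst hijq
      exact Or.inr ⟨hh, hn⟩

lemma run_lt_of_lt {i : ℕ} (h : i < S.length) :
    (i + 1) * (Fintype.card V + 1) ≤ S.length * (Fintype.card V + 1) :=
  Nat.mul_le_mul_right _ h

lemma BLF_covers (hG : G.Connected) (hcard : 1 < Fintype.card V)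
    (hwin : IsWinning G Set.univ S) :
    ∀ v : V, ∃ X ∈ BLF G S, v ∈ X := by
  intro v
  have hhv : hvF G S v < S.length := hvF_lt hG hcard hwin v
  have helt : ((Fintype.equivFin V v : ℕ) + 1) < Fintype.card V + 1 := by
    have := (Fintype.equivFin V v).isLt
    omega
  by_cases hhome : IsHomeF G S v
  · have hn : hvF G S v * (Fintype.card V + 1) + ((Fintype.equivFin V v : ℕ) + 1)
        < S.length * (Fintype.card V + 1) := by
      have h3 := run_lt_of_lt (S := S) hhv
      have h2 : (hvF G S v + 1) * (Fintype.card V + 1)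
          = hvF G S v * (Fintype.card V + 1) + (Fintype.card V + 1) := by ring
      omega
    refine ⟨(BLF G S).getD _ ∅, getD_mem_of_lt (by rw [BLF_length]; exact hn), ?_⟩
    rw [mem_BLF_iff hn]
    exact Or.inr ⟨hhome, rfl⟩
  · have hn : hvF G S v * (Fintype.card V + 1) < S.length * (Fintype.card V + 1) := by
      have h3 := run_lt_of_lt (S := S) hhv
      have h2 : (hvF G S v + 1) * (Fintype.card V + 1)
          = hvF G S v * (Fintype.card V + 1) + (Fintype.card V + 1) := by ring
      omega
    refine ⟨(BLF G S).getD _ ∅, getD_mem_of_lt (by rw [BLF_length]; exact hn), ?_⟩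
    rw [mem_BLF_iff hn]
    left
    have hdiv : hvF G S v * (Fintype.card V + 1) / (Fintype.card V + 1) = hvF G S v :=
      Nat.mul_div_cancel _ (by omega)
    rw [hdiv]
    exact ⟨hhome, le_rfl, hv_le_ev v⟩

lemma BLF_edges (hG : G.Connected) (hcard : 1 < Fintype.card V)
    (hwin : IsWinning G Set.univ S) :
    ∀ u v : V, G.Adj u v → ∃ X ∈ BLF G S, u ∈ X ∧ v ∈ X := by
  intro u v hadj
  set i₀ := max (hvF G S u) (hvF G S v) with hi₀def
  have hi₀u : i₀ ≤ evF G S u := by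
    apply max_le (hv_le_ev u)
    exact le_trans (adj_hv_le_Mv hwin hadj.symm) (Mv_le_ev u)
  have hi₀v : i₀ ≤ evF G S v := by
    apply max_le
    · exact le_trans (adj_hv_le_Mv hwin hadj) (Mv_le_ev v)
    · exact hv_le_ev v
  have hi₀ : i₀ < S.length :=
    max_lt (hvF_lt hG hcard hwin u) (hvF_lt hG hcard hwin v)
  have hkey : ∀ w : V, i₀ ≤ evF G S w → hvF G S w ≤ i₀ → IsHomeF G S w → hvF G S w = i₀ := by
    intro w h2 h1 hw
    have := home_ev hw
    omega
  have harith : ∀ r : ℕ, r < Fintype.card V + 1 →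
      i₀ * (Fintype.card V + 1) + r < S.length * (Fintype.card V + 1) ∧
      (i₀ * (Fintype.card V + 1) + r) / (Fintype.card V + 1) = i₀ := by
    intro r hr
    have h3 := run_lt_of_lt (S := S) hi₀
    have h2 : (i₀ + 1) * (Fintype.card V + 1)
        = i₀ * (Fintype.card V + 1) + (Fintype.card V + 1) := by ring
    exact ⟨by omega, nat_div_helper _ _ _ hr⟩
  by_cases hu : IsHomeF G S u
  · have hu0 : hvF G S u = i₀ := hkey u hi₀u (le_max_left _ _) hu
    have hnv : ¬IsHomeF G S v := by
      intro hv
      have hv0 : hvF G S v = i₀ := hkey v hi₀v (le_max_right _ _) hv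
      exact not_both_home hwin hadj hu hv (by omega)
    have helt : ((Fintype.equivFin V u : ℕ) + 1) < Fintype.card V + 1 := by
      have := (Fintype.equivFin V u).isLt
      omega
    obtain ⟨hn, hdiv⟩ := harith _ helt
    refine ⟨(BLF G S).getD (i₀ * (Fintype.card V + 1) + ((Fintype.equivFin V u : ℕ) + 1)) ∅,
      getD_mem_of_lt (by rw [BLF_length]; exact hn), ?_, ?_⟩
    · rw [mem_BLF_iff hn]
      exact Or.inr ⟨hu, by rw [hu0]⟩
    · rw [mem_BLF_iff hn]
      rw [hdiv]
      exact Or.inl ⟨hnv, le_max_right _ _, hi₀v⟩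
  · by_cases hv : IsHomeF G S v
    · have hv0 : hvF G S v = i₀ := hkey v hi₀v (le_max_right _ _) hv
      have helt : ((Fintype.equivFin V v : ℕ) + 1) < Fintype.card V + 1 := by
        have := (Fintype.equivFin V v).isLt
        omega
      obtain ⟨hn, hdiv⟩ := harith _ helt
      refine ⟨(BLF G S).getD (i₀ * (Fintype.card V + 1) + ((Fintype.equivFin V v : ℕ) + 1)) ∅,
        getD_mem_of_lt (by rw [BLF_length]; exact hn), ?_, ?_⟩
      · rw [mem_BLF_iff hn]
        rw [hdiv]
        exact Or.inl ⟨hu, le_max_left _ _, hi₀u⟩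
      · rw [mem_BLF_iff hn]
        exact Or.inr ⟨hv, by rw [hv0]⟩
    · obtain ⟨hn, hdiv⟩ := harith 0 (by omega)
      rw [Nat.add_zero] at hn hdiv
      refine ⟨(BLF G S).getD (i₀ * (Fintype.card V + 1)) ∅,
        getD_mem_of_lt (by rw [BLF_length]; exact hn), ?_, ?_⟩
      · rw [mem_BLF_iff hn, hdiv]
        exact Or.inl ⟨hu, le_max_left _ _, hi₀u⟩
      · rw [mem_BLF_iff hn, hdiv]
        exact Or.inl ⟨hv, le_max_right _ _, hi₀v⟩

lemma shots_card_le {k : ℕ} (hU : Uses S k) {i : ℕ} (hi : i < S.length) :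
    (shots S i).card ≤ k := by
  have : shots S i = S[i] := List.getD_eq_getElem _ _ hi
  rw [this]
  exact hU _ (List.getElem_mem hi)

lemma bagF_card_le (hwin : IsWinning G Set.univ S) (hmono : IsMonotoneStrat G Set.univ S)
    {k : ℕ} (hU : Uses S k) {i p : ℕ} (hi : i < S.length) :
    (bagF G S i p).card ≤ k + 1 := by
  classical
  have hsub : bagF G S i p ⊆ shots S i ∪
      Finset.univ.filter (fun v => IsHomeF G S v ∧ hvF G S v = i ∧
        ((Fintype.equivFin V v : ℕ) + 1 = p)) := by
    intro v hv
    rw [mem_bagF] at hv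
    rcases hv with ⟨h1, h2, h3⟩ | h
    · exact Finset.mem_union_left _ (base_subset_shots hwin hmono h1 h2 h3)
    · exact Finset.mem_union_right _ (by simpa using h)
  calc (bagF G S i p).card ≤ _ := Finset.card_le_card hsub
    _ ≤ (shots S i).card + _ := Finset.card_union_le _ _
    _ ≤ k + 1 := by
      gcongr
      · exact shots_card_le hU hi
      · apply Finset.card_le_one.mpr
        intro a ha b hb
        simp only [Finset.mem_filter] at ha hb
        have : (Fintype.equivFin V a : ℕ) = (Fintype.equivFin V b : ℕ) := by omega
        exact (Fintype.equivFin V).injective (Fin.ext this)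

lemma pathwidth_le_of_strategy (hG : G.Connected) (hcard : 1 < Fintype.card V)
    {k : ℕ} (hwin : IsWinning G Set.univ S) (hmono : IsMonotoneStrat G Set.univ S)
    (hU : Uses S k) : pathwidth G ≤ k := by
  apply Nat.sInf_le
  refine ⟨BLF G S, ⟨BLF_covers hG hcard hwin, BLF_edges hG hcard hwin, BLF_inter hwin⟩, ?_⟩
  intro X hX
  simp only [BLF, List.mem_map, List.mem_range] at hX
  obtain ⟨n, hn, rfl⟩ := hX
  apply bagF_card_le hwin hmono hU
  exact Nat.div_lt_of_lt_mul (by rw [mul_comm] at hn; exact hn)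

end PartB

section Main
variable {G : SimpleGraph V} [Fintype V]

lemma singleton_strategy_mem (hne : Nonempty V) :
    Fintype.card V ∈ {k | ∃ S : List (Finset V),
      ValidStrategy S ∧ IsWinning G Set.univ S ∧ IsMonotoneStrat G Set.univ S ∧ Uses S k} := by
  haveI := hne
  refine ⟨[Finset.univ], ?_, ?_, ?_, ?_⟩
  · intro s hs
    rw [List.mem_singleton] at hs
    subst hs
    exact Finset.univ_nonempty
  · intro r hr
    exact ⟨0, by simp, by simp [shots]⟩
  · intro v i j hi hij hj _ _
    exfalso
    simp only [List.length_singleton] at hi hj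
    omega
  · intro s hs
    rw [List.mem_singleton] at hs
    subst hs
    simp

lemma pathwidth_le_mhunterNum (hG : G.Connected) : pathwidth G ≤ mhunterNum G := by
  have hne : Nonempty V := hG.nonempty
  haveI := hne
  unfold mhunterNum mhunterNumW
  split_ifs with h1
  · show pathwidth G ≤ 0
    apply Nat.sInf_le
    refine ⟨[Finset.univ], trivialDecomp G, ?_⟩
    intro X hX
    rw [List.mem_singleton] at hX
    subst hX
    rw [Finset.card_univ, ← Nat.card_eq_fintype_card, h1]
  · have hcard : 1 < Fintype.card V := by
      have h2 : Nat.card V = Fintype.card V := Nat.card_eq_fintype_card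
      have h3 : 0 < Fintype.card V := Fintype.card_pos
      omega
    obtain ⟨S, hval, hwin, hmono, hU⟩ :=
      Nat.sInf_mem (⟨Fintype.card V, singleton_strategy_mem hne⟩ : Set.Nonempty
        {k | ∃ S : List (Finset V),
          ValidStrategy S ∧ IsWinning G Set.univ S ∧ IsMonotoneStrat G Set.univ S ∧ Uses S k})
    exact pathwidth_le_of_strategy hG hcard hwin hmono hU

end Main

/-- For every finite simple connected graph `G`,
`pw(G) ≤ mh(G) ≤ pw(G) + 1`. -/
theorem pathwidth_le_mhunterNum_le_pathwidth_add_one {V : Type} [Fintype V]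
    (G : SimpleGraph V) (hG : G.Connected) :
    pathwidth G ≤ mhunterNum G ∧ mhunterNum G ≤ pathwidth G + 1 :=
  ⟨pathwidth_le_mhunterNum hG, mhunterNum_le_pathwidth_add_one G⟩

end HuntersRabbit
end

section
/- For every split graph G = (C ∪ I, E), the hunter number equals the pathwidth: h(G) = pw(G). -/
open SimpleGraph

namespace HuntersRabbit

universe u

variable {V : Type u}

/-- `(C, I)` is a split partition of `G`: the vertex set is partitioned into `C`,
inducing an inclusion-maximal clique, and an independent set `I`. -/
def IsSplitPartition (G : SimpleGraph V) (C I : Finset V) : Prop :=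
  (∀ v : V, v ∈ C ∨ v ∈ I) ∧ (∀ v : V, ¬(v ∈ C ∧ v ∈ I)) ∧
  G.IsClique (↑C : Set V) ∧
  (∀ D : Finset V, C ⊆ D → G.IsClique (↑D : Set V) → D = C) ∧
  (∀ u ∈ I, ∀ v ∈ I, ¬ G.Adj u v)

section Aux
variable {V : Type} [Fintype V]

lemma shots_card {S : List (Finset V)} {k : ℕ} (h : Uses S k) (j : ℕ) :
    (shots S j).card ≤ k := by
  by_cases hj : j < S.length
  · rw [shots, List.getD_eq_getElem _ _ hj]
    exact h _ (List.getElem_mem hj)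
  · rw [shots, List.getD_eq_default _ _ (le_of_not_gt hj)]
    simp

lemma hunterNumW_le {G : SimpleGraph V} {W : Set V} (hne : Nat.card V ≠ 1)
    {S : List (Finset V)} {k : ℕ}
    (hv : ValidStrategy S) (hw : IsWinning G W S) (hu : Uses S k) :
    hunterNumW G W ≤ k := by
  rw [hunterNumW, if_neg hne]
  exact Nat.sInf_le ⟨S, hv, hw, hu⟩

lemma hunterNumW_ge {G : SimpleGraph V} {W : Set V} (hne : Nat.card V ≠ 1)
    {k : ℕ} (hex : ∃ S m, ValidStrategy S ∧ IsWinning G W S ∧ Uses S m)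
    (h : ∀ S m, ValidStrategy S → IsWinning G W S → Uses S m → k ≤ m) :
    k ≤ hunterNumW G W := by
  rw [hunterNumW, if_neg hne]
  obtain ⟨S, m, h1, h2, h3⟩ := hex
  exact le_csInf ⟨m, S, h1, h2, h3⟩ (fun b hb => by
    obtain ⟨S', h1', h2', h3'⟩ := hb; exact h S' b h1' h2' h3')

lemma pathwidth_le {G : SimpleGraph V} {B : List (Finset V)} {w : ℕ}
    (hd : IsPathDecomp G B) (hc : ∀ X ∈ B, X.card ≤ w + 1) :
    pathwidth G ≤ w :=
  Nat.sInf_le ⟨B, hd, hc⟩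

lemma pathwidth_ge {G : SimpleGraph V} {w : ℕ}
    (hex : ∃ B, IsPathDecomp G B)
    (h : ∀ B m, IsPathDecomp G B → (∀ X ∈ B, X.card ≤ m + 1) → w ≤ m) :
    w ≤ pathwidth G := by
  obtain ⟨B, hB⟩ := hex
  refine le_csInf ⟨Fintype.card V, B, hB, fun X hX => ?_⟩ ?_
  · exact le_trans (Finset.card_le_univ X) (by simp)
  · rintro m ⟨B', h1, h2⟩; exact h B' m h1 h2

end Aux
set_option linter.unusedSectionVars false
set_option maxHeartbeats 1000000

section Aux2
variable {V : Type} [Fintype V] [DecidableEq V]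

lemma zset_escape {G : SimpleGraph V} {W : Set V} {S : List (Finset V)} :
    ∀ j : ℕ, ∀ x ∈ Zset G W S j, ∃ r : ℕ → V, r j = x ∧ r 0 ∈ W ∧
      (∀ i, i < j → G.Adj (r i) (r (i + 1))) ∧ (∀ i, i < j → r i ∉ shots S i) := by
  intro j
  induction j with
  | zero => intro x hx; exact ⟨fun _ => x, rfl, hx, fun i hi => absurd hi (Nat.not_lt_zero i),
      fun i hi => absurd hi (Nat.not_lt_zero i)⟩
  | succ j ih =>
    intro x hx
    obtain ⟨y, hy, hyS, hyx⟩ := hx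
    obtain ⟨r, hrj, hr0, hadj, havoid⟩ := ih y hy
    refine ⟨fun i => if i ≤ j then r i else x, by simp, by simpa using hr0, ?_, ?_⟩
    · intro i hi
      rcases Nat.lt_or_ge i j with h | h
      · simpa [Nat.le_of_lt h, Nat.succ_le_of_lt h] using hadj i h
      · have : i = j := by omega
        subst this
        simpa [hrj] using hyx
    · intro i hi
      rcases Nat.lt_or_ge i j with h | h
      · simpa [Nat.le_of_lt h] using havoid i h
      · have : i = j := by omega
        subst this
        simpa [hrj] using hyS

lemma not_winning_of_zset_nonempty {G : SimpleGraph V} {W : Set V} {S : List (Finset V)}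
    (h : (Zset G W S S.length).Nonempty) : ¬ IsWinning G W S := by
  obtain ⟨x, hx⟩ := h
  obtain ⟨r, _, hr0, hadj, havoid⟩ := zset_escape S.length x hx
  intro hw
  obtain ⟨j, hj, hjmem⟩ := hw r ⟨hr0, hadj⟩
  exact havoid j hj hjmem

/-- With at most `c - 2` hunters, the rabbit can stay in a clique of size `c` forever. -/
lemma not_winning_of_clique {G : SimpleGraph V} {C : Finset V}
    (hclique : G.IsClique (↑C : Set V)) {S : List (Finset V)} {m : ℕ}
    (hu : Uses S m) (hm : m + 2 ≤ C.card) : ¬ IsWinning G Set.univ S := by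
  have hstep : ∀ (j : ℕ) (p : V), ((C \ shots S j).erase p).Nonempty := by
    intro j p
    rw [← Finset.card_pos]
    have h1 : C.card - (shots S j).card ≤ (C \ shots S j).card := Finset.le_card_sdiff _ _
    have h2 := Finset.pred_card_le_card_erase (s := C \ shots S j) (a := p)
    have h3 := shots_card hu j
    omega
  have hCne : C.Nonempty := Finset.card_pos.mp (by omega)
  obtain ⟨v₀, hv₀⟩ := hCne
  set r : ℕ → V := fun n => Nat.rec ((hstep 0 v₀).choose) (fun n p => (hstep (n + 1) p).choose) n
    with hrdef
  have hkey : ∀ n, r n ∈ (C \ shots S n).erase (if h : n = 0 then v₀ else r (n - 1)) := by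
    intro n
    cases n with
    | zero => exact (hstep 0 v₀).choose_spec
    | succ n => simpa using (hstep (n + 1) (r n)).choose_spec
  have hrC : ∀ n, r n ∈ C := fun n => (Finset.mem_sdiff.mp (Finset.mem_of_mem_erase (hkey n))).1
  have hrS : ∀ n, r n ∉ shots S n := fun n =>
    (Finset.mem_sdiff.mp (Finset.mem_of_mem_erase (hkey n))).2
  have hrne : ∀ n, r (n + 1) ≠ r n := by
    intro n
    have := (Finset.mem_erase.mp (hkey (n + 1))).1
    simpa using this
  intro hw
  obtain ⟨j, hj, hjmem⟩ := hw r ⟨Set.mem_univ _, fun i _ => hclique (hrC (i + 1)) (hrC i) (hrne i) |>.symm⟩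
  exact hrS j hjmem

end Aux2
section Aux3
variable {V : Type} [Fintype V] [DecidableEq V]

lemma nbr_mem_C {G : SimpleGraph V} {C I : Finset V} (hsplit : IsSplitPartition G C I)
    {v u : V} (hv : v ∈ I) (h : G.Adj v u) : u ∈ C := by
  rcases hsplit.1 u with h' | h'
  · exact h'
  · exact absurd h (hsplit.2.2.2.2 v hv u h')

lemma not_mem_C_of_mem_I {G : SimpleGraph V} {C I : Finset V}
    (hsplit : IsSplitPartition G C I) {v : V} (hv : v ∈ I) : v ∉ C :=
  fun h => hsplit.2.1 v ⟨h, hv⟩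

lemma zset_invariant {G : SimpleGraph V} {C I : Finset V} (hsplit : IsSplitPartition G C I)
    (hnc : ∀ x ∈ C, ∀ y ∈ C, ∃ v ∈ I, G.Adj v x ∧ G.Adj v y)
    {S : List (Finset V)} {m : ℕ} (hu : Uses S m) (hm : m + 1 ≤ C.card) (j : ℕ) :
    (↑C ⊆ Zset G Set.univ S j) ∨
      ∃ z ∈ C, (↑(C.erase z) : Set V) ⊆ Zset G Set.univ S j ∧
        ∀ v ∈ I, G.Adj v z → v ∈ Zset G Set.univ S j := by
  induction j with
  | zero => left; intro x _; exact Set.mem_univ x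
  | succ j ih =>
    have hZ' : ∀ y : V, y ∈ Zset G Set.univ S j → y ∉ shots S j →
        ∀ x : V, G.Adj y x → x ∈ Zset G Set.univ S (j + 1) :=
      fun y hy hyS x hyx => ⟨y, hy, hyS, hyx⟩
    rcases ih with hC | ⟨z, hzC, hCz, hNz⟩
    · -- C ⊆ Z_j : pick an unshot clique vertex u
      have : (C \ shots S j).Nonempty := by
        rw [← Finset.card_pos]
        have h1 : C.card - (shots S j).card ≤ (C \ shots S j).card := Finset.le_card_sdiff _ _
        have h3 := shots_card hu j
        omega
      obtain ⟨u, hu'⟩ := this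
      rw [Finset.mem_sdiff] at hu'
      right
      refine ⟨u, hu'.1, ?_, ?_⟩
      · intro w hw
        rw [Finset.coe_erase, Set.mem_diff] at hw
        have hadj : G.Adj u w := hsplit.2.2.1 hu'.1 hw.1 (fun h => hw.2 h.symm)
        exact hZ' u (hC hu'.1) hu'.2 w hadj
      · intro v hv hadj
        exact hZ' u (hC hu'.1) hu'.2 v hadj.symm
    · by_cases hw : ∃ w ∈ C.erase z, w ∉ shots S j
      · obtain ⟨w, hwz, hwS⟩ := hw
        have hwC : w ∈ C := Finset.mem_of_mem_erase hwz
        have hwZ : w ∈ Zset G Set.univ S j := hCz (by exact_mod_cast hwz)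
        right
        refine ⟨w, hwC, ?_, ?_⟩
        · intro u hu'
          rw [Finset.coe_erase, Set.mem_diff] at hu'
          have hadj : G.Adj w u := hsplit.2.2.1 hwC hu'.1 (fun h => hu'.2 h.symm)
          exact hZ' w hwZ hwS u hadj
        · intro v hv hadj
          exact hZ' w hwZ hwS v hadj.symm
      · push_neg at hw
        have hsub : C.erase z ⊆ shots S j := hw
        have hcard : (shots S j).card ≤ (C.erase z).card := by
          have h3 := shots_card hu j
          rw [Finset.card_erase_of_mem hzC]
          omega
        have heq : shots S j = C.erase z := (Finset.eq_of_subset_of_card_le hsub hcard).symm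
        left
        intro w hw'
        have hwC : w ∈ C := hw'
        obtain ⟨v, hvI, hvz, hvw⟩ := hnc z hzC w hwC
        have hvZ : v ∈ Zset G Set.univ S j := hNz v hvI hvz
        have hvS : v ∉ shots S j := by
          rw [heq]
          intro h
          exact not_mem_C_of_mem_I hsplit hvI (Finset.mem_of_mem_erase h)
        exact hZ' v hvZ hvS w hvw

lemma not_winning_nocond {G : SimpleGraph V} {C I : Finset V} (hsplit : IsSplitPartition G C I)
    (hnc : ∀ x ∈ C, ∀ y ∈ C, ∃ v ∈ I, G.Adj v x ∧ G.Adj v y)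
    (hc2 : 2 ≤ C.card) {S : List (Finset V)} {m : ℕ} (hu : Uses S m) (hm : m + 1 ≤ C.card) :
    ¬ IsWinning G Set.univ S := by
  apply not_winning_of_zset_nonempty
  rcases zset_invariant hsplit hnc hu hm S.length with hC | ⟨z, hzC, hCz, _⟩
  · obtain ⟨u, hu'⟩ := Finset.card_pos.mp (by omega : 0 < C.card)
    exact ⟨u, hC hu'⟩
  · have : (C.erase z).Nonempty := by
      rw [← Finset.card_pos, Finset.card_erase_of_mem hzC]; omega
    obtain ⟨u, hu'⟩ := this
    exact ⟨u, hCz (by exact_mod_cast hu')⟩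

end Aux3
section Aux4
variable {V : Type} [Fintype V] [DecidableEq V]

lemma eq_of_not_mem_erase {C : Finset V} {u x : V} (hu : u ∈ C) (h : u ∉ C.erase x) :
    u = x := by
  by_contra hne
  exact h (Finset.mem_erase.mpr ⟨hne, hu⟩)

lemma winning_CC {G : SimpleGraph V} {C I : Finset V} (hsplit : IsSplitPartition G C I) :
    IsWinning G Set.univ [C, C] := by
  rintro r ⟨-, hadj⟩
  rcases hsplit.1 (r 0) with h | h
  · exact ⟨0, by norm_num, by simpa [shots] using h⟩
  · refine ⟨1, by norm_num, ?_⟩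
    have hadj0 := hadj 0 (by norm_num)
    simpa [shots] using nbr_mem_C hsplit h hadj0

lemma winning_cond {G : SimpleGraph V} {C I : Finset V} (hsplit : IsSplitPartition G C I)
    {x y : V} (hx : x ∈ C) (hy : y ∈ C)
    (hcond : ∀ v ∈ I, ¬ G.Adj v x ∨ ¬ G.Adj v y) :
    IsWinning G Set.univ [C.erase x, C.erase y, C.erase y, C.erase x] := by
  rintro r ⟨-, hadj⟩
  by_contra hno
  push_neg at hno
  simp only [List.length_cons, List.length_nil] at hno
  have h0 : r 0 ∉ C.erase x := by simpa [shots] using hno 0 (by norm_num)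
  have h1 : r 1 ∉ C.erase y := by simpa [shots] using hno 1 (by norm_num)
  have h2 : r 2 ∉ C.erase y := by simpa [shots] using hno 2 (by norm_num)
  have h3 : r 3 ∉ C.erase x := by simpa [shots] using hno 3 (by norm_num)
  have hadj0 := hadj 0 (by norm_num)
  have hadj1 := hadj 1 (by norm_num)
  have hadj2 := hadj 2 (by norm_num)
  -- step 1 : r 1 = y
  have hr1 : r 1 = y := by
    have hcase : r 1 = y ∨ (r 1 ∈ I ∧ ¬ G.Adj (r 1) y) := by
      rcases hsplit.1 (r 0) with hc | hi
      · have hr0x : r 0 = x := eq_of_not_mem_erase hc h0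
        rcases hsplit.1 (r 1) with hc1 | hi1
        · exact Or.inl (eq_of_not_mem_erase hc1 h1)
        · right
          refine ⟨hi1, ?_⟩
          have hadjx : G.Adj (r 1) x := by rw [← hr0x]; exact hadj0.symm
          rcases hcond (r 1) hi1 with h | h
          · exact absurd hadjx h
          · exact h
      · have hc1 : r 1 ∈ C := nbr_mem_C hsplit hi hadj0
        exact Or.inl (eq_of_not_mem_erase hc1 h1)
    rcases hcase with h | ⟨hi1, hnadj⟩
    · exact h
    · exfalso
      have hc2 : r 2 ∈ C := nbr_mem_C hsplit hi1 hadj1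
      have hr2y : r 2 = y := eq_of_not_mem_erase hc2 h2
      exact hnadj (by rw [← hr2y]; exact hadj1)
  -- step 2 : r 2 ∈ I and not adjacent to x
  have hadjy2 : G.Adj y (r 2) := by rw [← hr1]; exact hadj1
  have hi2 : r 2 ∈ I := by
    rcases hsplit.1 (r 2) with hc | hi
    · exfalso
      have : r 2 = y := eq_of_not_mem_erase hc h2
      rw [this] at hadjy2
      exact G.irrefl hadjy2
    · exact hi
  have hnadjx : ¬ G.Adj (r 2) x := by
    rcases hcond (r 2) hi2 with h | h
    · exact h
    · exact absurd hadjy2.symm h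
  have hc3 : r 3 ∈ C := nbr_mem_C hsplit hi2 hadj2
  have hr3x : r 3 = x := eq_of_not_mem_erase hc3 h3
  exact hnadjx (by rw [← hr3x]; exact hadj2)

end Aux4
section Aux5
variable {V : Type} [Fintype V] [DecidableEq V]

lemma getD_mem_of_lt_s3 {B : List (Finset V)} {q : ℕ} (h : q < B.length) : B.getD q ∅ ∈ B := by
  rw [List.getD_eq_getElem _ _ h]
  exact List.getElem_mem h

lemma mem_getD_lt {B : List (Finset V)} {q : ℕ} {v : V} (h : v ∈ B.getD q ∅) : q < B.length := by
  by_contra hq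
  rw [List.getD_eq_default _ _ (le_of_not_gt hq)] at h
  simp at h

lemma bagSet_nonempty {G : SimpleGraph V} {B : List (Finset V)} (hd : IsPathDecomp G B)
    (v : V) : {i : ℕ | v ∈ B.getD i ∅}.Nonempty := by
  obtain ⟨X, hX, hvX⟩ := hd.covers v
  obtain ⟨i, hi, rfl⟩ := List.mem_iff_getElem.mp hX
  exact ⟨i, by rwa [Set.mem_setOf_eq, List.getD_eq_getElem _ _ hi]⟩

/-- Helly: every clique is contained in some bag of a path decomposition. -/
lemma clique_in_bag {G : SimpleGraph V} {B : List (Finset V)} (hd : IsPathDecomp G B)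
    {K : Finset V} (hK : G.IsClique (↑K : Set V)) (hne : K.Nonempty) :
    ∃ p, p < B.length ∧ ∀ u ∈ K, u ∈ B.getD p ∅ := by
  set l : V → ℕ := fun v => sInf {i : ℕ | v ∈ B.getD i ∅} with hl
  have hlmem : ∀ v : V, v ∈ B.getD (l v) ∅ := fun v => Nat.sInf_mem (bagSet_nonempty hd v)
  obtain ⟨w, hwK, hwmax⟩ := K.exists_max_image l hne
  refine ⟨l w, mem_getD_lt (hlmem w), ?_⟩
  intro u huK
  by_cases huw : u = w
  · subst huw; exact hlmem u
  · have hadj : G.Adj u w := hK huK hwK huw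
    obtain ⟨X, hX, huX, hwX⟩ := hd.edges u w hadj
    obtain ⟨q, hq, rfl⟩ := List.mem_iff_getElem.mp hX
    have hqD : u ∈ B.getD q ∅ ∧ w ∈ B.getD q ∅ := by
      rw [List.getD_eq_getElem _ _ hq]; exact ⟨huX, hwX⟩
    have h1 : l w ≤ q := Nat.sInf_le hqD.2
    have h2 : l u ≤ l w := hwmax u huK
    exact hd.inter (l u) (l w) q h2 h1 hq u (hlmem u) hqD.1

lemma pw_lower_clique {G : SimpleGraph V} {C : Finset V} (hC : G.IsClique (↑C : Set V))
    (hne : C.Nonempty) {B : List (Finset V)} {m : ℕ}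
    (hd : IsPathDecomp G B) (hcard : ∀ X ∈ B, X.card ≤ m + 1) : C.card ≤ m + 1 := by
  obtain ⟨p, hp, hsub⟩ := clique_in_bag hd hC hne
  calc C.card ≤ (B.getD p ∅).card := Finset.card_le_card (fun u hu => hsub u hu)
    _ ≤ m + 1 := hcard _ (getD_mem_of_lt_s3 hp)

lemma pw_lower_nocond {G : SimpleGraph V} {C I : Finset V} (hsplit : IsSplitPartition G C I)
    (hnc : ∀ x ∈ C, ∀ y ∈ C, ∃ v ∈ I, G.Adj v x ∧ G.Adj v y) (hne : C.Nonempty)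
    {B : List (Finset V)} {m : ℕ}
    (hd : IsPathDecomp G B) (hcard : ∀ X ∈ B, X.card ≤ m + 1) : C.card ≤ m := by
  by_contra hcon
  have hmc : m + 1 ≤ C.card := by omega
  -- the bag containing the clique C is exactly C
  obtain ⟨p, hp, hsub⟩ := clique_in_bag hd hsplit.2.2.1 hne
  have hCsub : C ⊆ B.getD p ∅ := fun u hu => hsub u hu
  have hbagp : C = B.getD p ∅ := by
    apply Finset.eq_of_subset_of_card_le hCsub
    exact le_trans (hcard _ (getD_mem_of_lt_s3 hp)) hmc
  set l : V → ℕ := fun v => sInf {i : ℕ | v ∈ B.getD i ∅} with hldef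
  set rr : V → ℕ := fun v => sSup {i : ℕ | v ∈ B.getD i ∅} with hrdef
  have hbdd : ∀ v : V, BddAbove {i : ℕ | v ∈ B.getD i ∅} :=
    fun v => ⟨B.length, fun i hi => le_of_lt (mem_getD_lt hi)⟩
  have hlmem : ∀ v : V, v ∈ B.getD (l v) ∅ := fun v => Nat.sInf_mem (bagSet_nonempty hd v)
  have hrmem : ∀ v : V, v ∈ B.getD (rr v) ∅ := fun v =>
    Nat.sSup_mem (bagSet_nonempty hd v) (hbdd v)
  obtain ⟨xs, hxsC, hxsmax⟩ := C.exists_max_image l hne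
  obtain ⟨ys, hysC, hysmin⟩ := C.exists_min_image rr hne
  obtain ⟨v, hvI, hvx, hvy⟩ := hnc xs hxsC ys hysC
  have hvnC : v ∉ C := not_mem_C_of_mem_I hsplit hvI
  -- the triangle {v, xs, ys} lies in some bag q
  have hKclique : G.IsClique (↑({v, xs, ys} : Finset V) : Set V) := by
    intro a ha b hb hab
    simp only [Finset.coe_insert, Set.mem_insert_iff, Finset.coe_singleton,
      Finset.mem_coe, Finset.mem_singleton, Finset.mem_insert] at ha hb
    rcases ha with rfl | rfl | rfl <;> rcases hb with rfl | rfl | rfl <;>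
      first
        | exact absurd rfl hab
        | exact hvx
        | exact hvy
        | exact hvx.symm
        | exact hvy.symm
        | exact hsplit.2.2.1 (by assumption) (by assumption) hab
  obtain ⟨q, hq, hKsub⟩ := clique_in_bag hd hKclique ⟨v, Finset.mem_insert_self _ _⟩
  have hvq : v ∈ B.getD q ∅ := hKsub v (by simp)
  have hxq : xs ∈ B.getD q ∅ := hKsub xs (by simp)
  have hyq : ys ∈ B.getD q ∅ := hKsub ys (by simp)
  have hqp : q ≠ p := by
    intro h
    rw [h, ← hbagp] at hvq
    exact hvnC hvq
  -- in either case every vertex of C is in bag q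
  have hCq : ∀ u ∈ C, u ∈ B.getD q ∅ := by
    intro u huC
    rcases lt_or_gt_of_ne hqp with hlt | hgt
    · have h1 : l u ≤ q := le_trans (hxsmax u huC) (Nat.sInf_le hxq)
      exact hd.inter (l u) q p h1 (le_of_lt hlt) hp u (hlmem u) (by rwa [← hbagp])
    · have h1 : q ≤ rr u := le_trans (le_csSup (hbdd ys) hyq) (hysmin u huC)
      exact hd.inter p q (rr u) (le_of_lt hgt) h1 (mem_getD_lt (hrmem u)) u
        (by rwa [← hbagp]) (hrmem u)
  have hfinal : insert v C ⊆ B.getD q ∅ := by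
    intro u hu
    rcases Finset.mem_insert.mp hu with rfl | hu
    · exact hvq
    · exact hCq u hu
  have hcardfin : C.card + 1 ≤ (B.getD q ∅).card := by
    rw [← Finset.card_insert_of_notMem hvnC]
    exact Finset.card_le_card hfinal
  have := hcard _ (getD_mem_of_lt_s3 hq)
  omega

end Aux5
section Aux6
variable {V : Type} [Fintype V] [DecidableEq V]

/-- The trivial decomposition `[C, C∪{v₁}, …]` of a split graph, width `|C|`. -/
lemma decomp_trivial {G : SimpleGraph V} {C I : Finset V} (hsplit : IsSplitPartition G C I) :
    IsPathDecomp G (C :: I.toList.map (fun v => insert v C)) ∧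
      ∀ X ∈ (C :: I.toList.map (fun v => insert v C)), X.card ≤ C.card + 1 := by
  set B := C :: I.toList.map (fun v => insert v C) with hB
  have hCB : C ∈ B := List.mem_cons_self
  have hIB : ∀ v ∈ I, insert v C ∈ B := fun v hv =>
    List.mem_cons_of_mem _ (List.mem_map.mpr ⟨v, Finset.mem_toList.mpr hv, rfl⟩)
  have hCsub : ∀ X ∈ B, C ⊆ X := by
    intro X hX
    rcases List.mem_cons.mp hX with rfl | hX
    · exact Finset.Subset.refl _
    · obtain ⟨v, _, rfl⟩ := List.mem_map.mp hX
      exact Finset.subset_insert _ _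
  have hbag : ∀ (k : ℕ) (h : k < I.toList.length),
      B.getD (k + 1) ∅ = insert (I.toList[k]) C := by
    intro k h
    rw [hB, List.getD_cons_succ, List.getD_eq_getElem _ _ (by simpa using h),
      List.getElem_map]
  constructor
  · constructor
    · intro v
      rcases hsplit.1 v with h | h
      · exact ⟨C, hCB, h⟩
      · exact ⟨insert v C, hIB v h, Finset.mem_insert_self _ _⟩
    · intro u v huv
      rcases hsplit.1 u with hu | hu
      · rcases hsplit.1 v with hv | hv
        · exact ⟨C, hCB, hu, hv⟩
        · exact ⟨insert v C, hIB v hv, Finset.mem_insert_of_mem hu, Finset.mem_insert_self _ _⟩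
      · have hv : v ∈ C := nbr_mem_C hsplit hu huv
        exact ⟨insert u C, hIB u hu, Finset.mem_insert_self _ _, Finset.mem_insert_of_mem hv⟩
    · intro i j q hij hjq hq u hi hq'
      rcases hsplit.1 u with hu | hu
      · exact hCsub _ (getD_mem_of_lt_s3 (lt_of_le_of_lt hjq hq)) hu
      · -- u ∈ I appears in exactly one bag
        have hunC : u ∉ C := not_mem_C_of_mem_I hsplit hu
        have huniq : ∀ (i' : ℕ), u ∈ B.getD i' ∅ → i' < B.length →
            ∃ (k : ℕ) (h : k < I.toList.length), i' = k + 1 ∧ I.toList[k] = u := by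
          intro i' hmem hlen
          cases i' with
          | zero => rw [hB, List.getD_cons_zero] at hmem; exact absurd hmem hunC
          | succ k =>
            have hk : k < I.toList.length := by
              rw [hB] at hlen; simp only [List.length_cons, List.length_map] at hlen; omega
            rw [hbag k hk] at hmem
            rcases Finset.mem_insert.mp hmem with h | h
            · exact ⟨k, hk, rfl, h.symm⟩
            · exact absurd h hunC
        obtain ⟨k1, hk1, rfl, he1⟩ := huniq i hi (lt_of_le_of_lt (le_trans hij hjq) hq)
        obtain ⟨k2, hk2, rfl, he2⟩ := huniq q hq' hq
        have : k1 = k2 := by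
          have hnd : I.toList.Nodup := I.nodup_toList
          exact (List.Nodup.getElem_inj_iff hnd).mp (he1.trans he2.symm)
        subst this
        have : j = k1 + 1 := by omega
        subst this
        exact hi
  · intro X hX
    rcases List.mem_cons.mp hX with rfl | hX
    · omega
    · obtain ⟨v, _, rfl⟩ := List.mem_map.mp hX
      exact le_trans (Finset.card_insert_le _ _) (by omega)
end Aux6
section Aux7
variable {V : Type} [Fintype V] [DecidableEq V]

lemma decomp_cond {G : SimpleGraph V} {C I : Finset V} (hsplit : IsSplitPartition G C I)
    {x y : V} (hx : x ∈ C) (hy : y ∈ C)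
    (hcond : ∀ v ∈ I, ¬ G.Adj v x ∨ ¬ G.Adj v y) :
    ∃ B : List (Finset V), IsPathDecomp G B ∧ ∀ X ∈ B, X.card ≤ C.card := by
  classical
  set A : Finset V := I.filter (fun v => ¬ G.Adj v x) with hA
  set LA : List V := A.toList with hLA
  set LB : List V := (I \ A).toList with hLB
  set f : V → Finset V := fun v => insert v (C.erase x) with hf
  set g : V → Finset V := fun v => insert v (C.erase y) with hg
  set B : List (Finset V) := LA.map f ++ C :: LB.map g with hBdef
  have hmemA : ∀ v ∈ A, v ∈ I ∧ ¬ G.Adj v x := fun v hv => by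
    rw [hA] at hv; exact ⟨(Finset.mem_filter.mp hv).1, (Finset.mem_filter.mp hv).2⟩
  have hmemB' : ∀ v ∈ I \ A, v ∈ I ∧ G.Adj v x ∧ ¬ G.Adj v y := by
    intro v hv
    rw [Finset.mem_sdiff] at hv
    have hadjx : G.Adj v x := by
      by_contra h
      exact hv.2 (by rw [hA]; exact Finset.mem_filter.mpr ⟨hv.1, h⟩)
    have : ¬ G.Adj v y := by
      rcases hcond v hv.1 with h | h
      · exact absurd hadjx h
      · exact h
    exact ⟨hv.1, hadjx, this⟩
  have hlen : B.length = LA.length + 1 + LB.length := by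
    rw [hBdef]; simp; omega
  have hbag1 : ∀ (j : ℕ) (h : j < LA.length),
      B.getD j ∅ = insert (LA[j]) (C.erase x) := by
    intro j h
    rw [hBdef, List.getD_append _ _ _ _ (by simpa using h),
      List.getD_eq_getElem _ _ (by simpa using h), List.getElem_map]
  have hbag2 : B.getD LA.length ∅ = C := by
    rw [hBdef, List.getD_append_right _ _ _ _ (by simp)]
    simp
  have hbag3 : ∀ (j : ℕ) (hj : LA.length < j) (h2 : j < B.length),
      ∃ (h3 : j - LA.length - 1 < LB.length),
        B.getD j ∅ = insert (LB[j - LA.length - 1]) (C.erase y) := by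
    intro j hj h2
    rw [hlen] at h2
    have h3 : j - LA.length - 1 < LB.length := by omega
    refine ⟨h3, ?_⟩
    rw [hBdef, List.getD_append_right _ _ _ _ (by simp; omega)]
    have heq : j - (LA.map f).length = (j - LA.length - 1) + 1 := by simp; omega
    rw [heq, List.getD_cons_succ, List.getD_eq_getElem _ _ (by simpa using h3),
      List.getElem_map]
  have hCB : C ∈ B := by
    rw [hBdef]; exact List.mem_append_right _ (List.mem_cons_self)
  have hfB : ∀ v ∈ A, f v ∈ B := fun v hv => by
    rw [hBdef]
    exact List.mem_append_left _ (List.mem_map.mpr ⟨v, by rw [hLA]; exact Finset.mem_toList.mpr hv, rfl⟩)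
  have hgB : ∀ v ∈ I \ A, g v ∈ B := fun v hv => by
    rw [hBdef]
    exact List.mem_append_right _ (List.mem_cons_of_mem _
      (List.mem_map.mpr ⟨v, by rw [hLB]; exact Finset.mem_toList.mpr hv, rfl⟩))
  -- membership characterization for bags, used in `inter`
  have hchar : ∀ (k : ℕ), k < B.length → ∀ u : V, u ∉ C → u ∈ B.getD k ∅ →
      (∃ (h : k < LA.length), LA[k] = u) ∨
        (∃ (hk : LA.length < k) (h : k - LA.length - 1 < LB.length), LB[k - LA.length - 1] = u) := by
    intro k hk u hunC hmem
    rcases lt_trichotomy k LA.length with h | h | h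
    · rw [hbag1 k h] at hmem
      rcases Finset.mem_insert.mp hmem with h' | h'
      · exact Or.inl ⟨h, h'.symm⟩
      · exact absurd (Finset.mem_of_mem_erase h') hunC
    · subst h; rw [hbag2] at hmem; exact absurd hmem hunC
    · obtain ⟨h3, hb⟩ := hbag3 k h hk
      rw [hb] at hmem
      rcases Finset.mem_insert.mp hmem with h' | h'
      · exact Or.inr ⟨h, h3, h'.symm⟩
      · exact absurd (Finset.mem_of_mem_erase h') hunC
  refine ⟨B, ⟨?_, ?_, ?_⟩, ?_⟩
  · -- covers
    intro v
    rcases hsplit.1 v with h | h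
    · exact ⟨C, hCB, h⟩
    · by_cases hvA : v ∈ A
      · exact ⟨f v, hfB v hvA, Finset.mem_insert_self _ _⟩
      · exact ⟨g v, hgB v (Finset.mem_sdiff.mpr ⟨h, hvA⟩), Finset.mem_insert_self _ _⟩
  · -- edges
    intro u v huv
    have key : ∀ u v : V, G.Adj u v → u ∈ I → ∃ X ∈ B, u ∈ X ∧ v ∈ X := by
      intro u v huv hu
      have hvC : v ∈ C := nbr_mem_C hsplit hu huv
      by_cases hvA : u ∈ A
      · refine ⟨f u, hfB u hvA, Finset.mem_insert_self _ _, Finset.mem_insert_of_mem ?_⟩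
        refine Finset.mem_erase.mpr ⟨?_, hvC⟩
        rintro rfl
        exact (hmemA u hvA).2 huv
      · have hu' : u ∈ I \ A := Finset.mem_sdiff.mpr ⟨hu, hvA⟩
        refine ⟨g u, hgB u hu', Finset.mem_insert_self _ _, Finset.mem_insert_of_mem ?_⟩
        refine Finset.mem_erase.mpr ⟨?_, hvC⟩
        rintro rfl
        exact (hmemB' u hu').2.2 huv
    rcases hsplit.1 u with hu | hu
    · rcases hsplit.1 v with hv | hv
      · exact ⟨C, hCB, hu, hv⟩
      · obtain ⟨X, h1, h2, h3⟩ := key v u huv.symm hv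
        exact ⟨X, h1, h3, h2⟩
    · exact key u v huv hu
  · -- inter
    intro i j q hij hjq hq u hiu hqu
    have hj : j < B.length := lt_of_le_of_lt hjq hq
    have hi : i < B.length := lt_of_le_of_lt (le_trans hij hjq) hq
    rcases hsplit.1 u with huC | huI
    · by_cases hux : u = x
      · subst hux
        -- u = x : appears only from index LA.length on
        have hia : LA.length ≤ i := by
          by_contra h
          push_neg at h
          rw [hbag1 i h] at hiu
          rcases Finset.mem_insert.mp hiu with h' | h'
          · have : LA[i] ∈ A := Finset.mem_toList.mp (by rw [← hLA]; exact List.getElem_mem h)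
            exact not_mem_C_of_mem_I hsplit (hmemA _ this).1 (h' ▸ huC)
          · exact (Finset.mem_erase.mp h').1 rfl
        rcases lt_trichotomy j LA.length with h | h | h
        · omega
        · rw [h, hbag2]; exact huC
        · have hqa : LA.length < q := lt_of_lt_of_le h hjq
          obtain ⟨h3q, hbq⟩ := hbag3 q hqa hq
          rw [hbq] at hqu
          have hxy : u ≠ y := by
            rcases Finset.mem_insert.mp hqu with h' | h'
            · exfalso
              have : LB[q - LA.length - 1] ∈ I \ A := Finset.mem_toList.mp
                (by rw [← hLB]; exact List.getElem_mem h3q)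
              exact not_mem_C_of_mem_I hsplit (Finset.mem_sdiff.mp this).1 (h' ▸ huC)
            · exact (Finset.mem_erase.mp h').1
          obtain ⟨h3j, hbj⟩ := hbag3 j h hj
          rw [hbj]
          exact Finset.mem_insert_of_mem (Finset.mem_erase.mpr ⟨hxy, huC⟩)
      · by_cases huy : u = y
        · subst huy
          -- u = y : appears only up to index LA.length
          have hqa : q ≤ LA.length := by
            by_contra h
            push_neg at h
            obtain ⟨h3q, hbq⟩ := hbag3 q h hq
            rw [hbq] at hqu
            rcases Finset.mem_insert.mp hqu with h' | h'
            · have : LB[q - LA.length - 1] ∈ I \ A := Finset.mem_toList.mp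
                (by rw [← hLB]; exact List.getElem_mem h3q)
              exact not_mem_C_of_mem_I hsplit (Finset.mem_sdiff.mp this).1 (h' ▸ huC)
            · exact (Finset.mem_erase.mp h').1 rfl
          rcases lt_trichotomy j LA.length with h | h | h
          · have hia : i < LA.length := lt_of_le_of_lt hij h
            rw [hbag1 i hia] at hiu
            have hxy : u ≠ x := by
              rcases Finset.mem_insert.mp hiu with h' | h'
              · exfalso
                have : LA[i] ∈ A := Finset.mem_toList.mp (by rw [← hLA]; exact List.getElem_mem hia)
                exact not_mem_C_of_mem_I hsplit (hmemA _ this).1 (h' ▸ huC)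
              · exact (Finset.mem_erase.mp h').1
            rw [hbag1 j h]
            exact Finset.mem_insert_of_mem (Finset.mem_erase.mpr ⟨hxy, huC⟩)
          · rw [h, hbag2]; exact huC
          · omega
        · -- u ∈ C, u ≠ x, u ≠ y : u is in every bag
          rcases lt_trichotomy j LA.length with h | h | h
          · rw [hbag1 j h]
            exact Finset.mem_insert_of_mem (Finset.mem_erase.mpr ⟨hux, huC⟩)
          · rw [h, hbag2]; exact huC
          · obtain ⟨h3j, hbj⟩ := hbag3 j h hj
            rw [hbj]
            exact Finset.mem_insert_of_mem (Finset.mem_erase.mpr ⟨huy, huC⟩)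
    · -- u ∈ I : unique bag
      have hunC : u ∉ C := not_mem_C_of_mem_I hsplit huI
      have hLAnd : LA.Nodup := by rw [hLA]; exact A.nodup_toList
      have hLBnd : LB.Nodup := by rw [hLB]; exact (I \ A).nodup_toList
      have hieq : i = q := by
        rcases hchar i hi u hunC hiu with ⟨h1, he1⟩ | ⟨h1, h2, he1⟩ <;>
          rcases hchar q hq u hunC hqu with ⟨h1', he1'⟩ | ⟨h1', h2', he1'⟩
        · exact (List.Nodup.getElem_inj_iff hLAnd).mp (he1.trans he1'.symm)
        · exfalso
          have hA1 : u ∈ A := Finset.mem_toList.mp (by rw [← hLA, ← he1]; exact List.getElem_mem h1)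
          have hA2 : u ∈ I \ A := Finset.mem_toList.mp
            (by rw [← hLB, ← he1']; exact List.getElem_mem h2')
          exact (Finset.mem_sdiff.mp hA2).2 hA1
        · exfalso
          have hA1 : u ∈ A := Finset.mem_toList.mp (by rw [← hLA, ← he1']; exact List.getElem_mem h1')
          have hA2 : u ∈ I \ A := Finset.mem_toList.mp
            (by rw [← hLB, ← he1]; exact List.getElem_mem h2)
          exact (Finset.mem_sdiff.mp hA2).2 hA1
        · have := (List.Nodup.getElem_inj_iff hLBnd).mp (he1.trans he1'.symm)
          omega
      have : j = i := by omega
      rw [this]; exact hiu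
  · -- cards
    intro X hX
    rw [hBdef] at hX
    rcases List.mem_append.mp hX with h | h
    · obtain ⟨v, _, rfl⟩ := List.mem_map.mp h
      calc (f v).card ≤ (C.erase x).card + 1 := Finset.card_insert_le _ _
        _ ≤ C.card := by rw [Finset.card_erase_of_mem hx]; have := Finset.card_pos.mpr ⟨x, hx⟩; omega
    · rcases List.mem_cons.mp h with rfl | h
      · exact le_refl _
      · obtain ⟨v, _, rfl⟩ := List.mem_map.mp h
        calc (g v).card ≤ (C.erase y).card + 1 := Finset.card_insert_le _ _
          _ ≤ C.card := by rw [Finset.card_erase_of_mem hy]; have := Finset.card_pos.mpr ⟨y, hy⟩; omega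

end Aux7
section Aux8
variable {V : Type} [Fintype V] [DecidableEq V]

lemma exists_adj_of_connected {G : SimpleGraph V} (hG : G.Connected)
    (h2 : 2 ≤ Fintype.card V) (v : V) : ∃ u, G.Adj v u := by
  obtain ⟨w, hw⟩ := Fintype.exists_ne_of_one_lt_card (by omega) v
  obtain ⟨p⟩ := hG.preconnected v w
  cases p with
  | nil => exact absurd rfl hw
  | cons h _ => exact ⟨_, h⟩

lemma valid_uses_one_le {G : SimpleGraph V} [Nonempty V] {S : List (Finset V)} {m : ℕ}
    (hv : ValidStrategy S) (hw : IsWinning G Set.univ S) (hu : Uses S m) : 1 ≤ m := by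
  by_contra h
  push_neg at h
  have hm0 : m = 0 := by omega
  have hS : S = [] := by
    cases S with
    | nil => rfl
    | cons a S' =>
      exfalso
      have h1 := hv a (List.mem_cons_self)
      have h2 := hu a (List.mem_cons_self)
      rw [hm0, Nat.le_zero, Finset.card_eq_zero] at h2
      rw [h2] at h1
      exact Finset.not_nonempty_empty h1
  subst hS
  obtain ⟨j, hj, -⟩ := hw (fun _ => Classical.arbitrary V)
    ⟨Set.mem_univ _, fun i hi => absurd hi (by simp)⟩
  simp at hj
end Aux8

/-- For every split graph `G = (C ∪ I, E)`, `h(G) = pw(G)`. -/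
theorem split_hunterNum_eq_pathwidth {V : Type} [Fintype V]
    (G : SimpleGraph V) (hG : G.Connected) (C I : Finset V)
    (hsplit : IsSplitPartition G C I) :
    hunterNum G = pathwidth G := by
  classical
  haveI : Nonempty V := hG.nonempty
  have hNat : Nat.card V = Fintype.card V := Nat.card_eq_fintype_card
  by_cases hn1 : Nat.card V = 1
  · -- one-vertex graph
    have hh : hunterNum G = 0 := by rw [hunterNum, hunterNumW, if_pos hn1]
    have hp : pathwidth G = 0 := by
      rw [pathwidth]
      apply Nat.sInf_eq_zero.mpr
      left
      refine ⟨[Finset.univ], ⟨?_, ?_, ?_⟩, ?_⟩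
      · exact fun v => ⟨Finset.univ, List.mem_singleton.mpr rfl, Finset.mem_univ v⟩
      · exact fun u v _ => ⟨Finset.univ, List.mem_singleton.mpr rfl, Finset.mem_univ u,
          Finset.mem_univ v⟩
      · intro i j q hij hjq hq v h1 h2
        have hi0 : i = 0 := by simp at hq; omega
        have hj0 : j = 0 := by simp at hq; omega
        rw [hj0, ← hi0]
        exact h1
      · intro X hX
        rw [List.mem_singleton.mp hX]
        rw [Finset.card_univ, ← hNat, hn1]
    rw [hh, hp]
  · have hn2 : 2 ≤ Fintype.card V := by
      have : 1 ≤ Fintype.card V := Fintype.card_pos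
      omega
    have hCne : C.Nonempty := by
      by_contra h
      rw [Finset.not_nonempty_iff_eq_empty] at h
      obtain ⟨v⟩ := (inferInstance : Nonempty V)
      have hcl : G.IsClique (↑({v} : Finset V) : Set V) := by
        simp only [Finset.coe_singleton]
        exact Set.pairwise_singleton _ _
      have := hsplit.2.2.2.1 {v} (by rw [h]; exact Finset.empty_subset _) hcl
      rw [h] at this
      simp at this
    have hc1 : 1 ≤ C.card := Finset.card_pos.mpr hCne
    by_cases hcond : ∃ x ∈ C, ∃ y ∈ C, ∀ v ∈ I, ¬ G.Adj v x ∨ ¬ G.Adj v y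
    · -- h(G) = pw(G) = |C| - 1
      obtain ⟨x, hx, y, hy, hcnd⟩ := hcond
      have hc2 : 2 ≤ C.card := by
        by_contra h
        have hc1' : C.card = 1 := by omega
        -- C = {x}
        have hCx : C = {x} := by
          obtain ⟨z, hz⟩ := Finset.card_eq_one.mp hc1'
          have hxz : x = z := by rw [hz, Finset.mem_singleton] at hx; exact hx
          rw [hz, hxz]
        -- pick a vertex outside C
        obtain ⟨v, hv⟩ := Fintype.exists_ne_of_one_lt_card (by omega) x
        have hvI : v ∈ I := by
          rcases hsplit.1 v with h' | h'
          · rw [hCx, Finset.mem_singleton] at h'; exact absurd h' hv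
          · exact h'
        obtain ⟨u, hu⟩ := exists_adj_of_connected hG hn2 v
        have huC : u ∈ C := nbr_mem_C hsplit hvI hu
        rw [hCx, Finset.mem_singleton] at huC
        rw [huC] at hu
        have hyx : y = x := by rw [hCx, Finset.mem_singleton] at hy; exact hy
        rcases hcnd v hvI with h' | h'
        · exact h' hu
        · rw [hyx] at h'; exact h' hu
      -- the four-shot strategy
      set S4 : List (Finset V) := [C.erase x, C.erase y, C.erase y, C.erase x] with hS4
      have hvalid : ValidStrategy S4 := by
        intro s hs
        have hax : (C.erase x).Nonempty := by
          rw [← Finset.card_pos, Finset.card_erase_of_mem hx]; omega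
        have hay : (C.erase y).Nonempty := by
          rw [← Finset.card_pos, Finset.card_erase_of_mem hy]; omega
        rw [hS4, List.mem_cons, List.mem_cons, List.mem_cons, List.mem_singleton] at hs
        rcases hs with rfl | rfl | rfl | rfl <;> first | exact hax | exact hay
      have huses : Uses S4 (C.card - 1) := by
        intro s hs
        rw [hS4, List.mem_cons, List.mem_cons, List.mem_cons, List.mem_singleton] at hs
        rcases hs with rfl | rfl | rfl | rfl
        · exact le_of_eq (Finset.card_erase_of_mem hx)
        · exact le_of_eq (Finset.card_erase_of_mem hy)
        · exact le_of_eq (Finset.card_erase_of_mem hy)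
        · exact le_of_eq (Finset.card_erase_of_mem hx)
      have hwin : IsWinning G Set.univ S4 := winning_cond hsplit hx hy hcnd
      have hle : hunterNum G ≤ C.card - 1 := hunterNumW_le hn1 hvalid hwin huses
      have hge : C.card - 1 ≤ hunterNum G := by
        apply hunterNumW_ge hn1 ⟨S4, C.card - 1, hvalid, hwin, huses⟩
        intro S m hv hw hu
        by_contra h
        push_neg at h
        exact not_winning_of_clique hsplit.2.2.1 hu (by omega) hw
      obtain ⟨B, hB, hBc⟩ := decomp_cond hsplit hx hy hcnd
      have hple : pathwidth G ≤ C.card - 1 :=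
        pathwidth_le hB (fun X hX => by have := hBc X hX; omega)
      have hpge : C.card - 1 ≤ pathwidth G := by
        apply pathwidth_ge ⟨B, hB⟩
        intro B' m hd hcard
        have := pw_lower_clique hsplit.2.2.1 hCne hd hcard
        omega
      omega
    · -- h(G) = pw(G) = |C|
      push_neg at hcond
      have hnc : ∀ x ∈ C, ∀ y ∈ C, ∃ v ∈ I, G.Adj v x ∧ G.Adj v y := hcond
      have hvalid : ValidStrategy [C, C] := by
        intro s hs
        rw [List.mem_cons, List.mem_singleton] at hs
        rcases hs with rfl | rfl <;> exact hCne
      have huses : Uses [C, C] C.card := by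
        intro s hs
        rw [List.mem_cons, List.mem_singleton] at hs
        rcases hs with rfl | rfl <;> exact le_refl _
      have hwin : IsWinning G Set.univ [C, C] := winning_CC hsplit
      have hle : hunterNum G ≤ C.card := hunterNumW_le hn1 hvalid hwin huses
      have hge : C.card ≤ hunterNum G := by
        apply hunterNumW_ge hn1 ⟨[C, C], C.card, hvalid, hwin, huses⟩
        intro S m hv hw hu
        rcases Nat.lt_or_ge C.card 2 with h2 | h2
        · have := valid_uses_one_le hv hw hu
          omega
        · by_contra h
          push_neg at h
          exact not_winning_nocond hsplit hnc h2 hu (by omega) hw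
      obtain ⟨hB, hBc⟩ := decomp_trivial hsplit
      have hple : pathwidth G ≤ C.card := pathwidth_le hB hBc
      have hpge : C.card ≤ pathwidth G := by
        apply pathwidth_ge ⟨_, hB⟩
        intro B' m hd hcard
        exact pw_lower_nocond hsplit hnc hCne hd hcard
      omega

end HuntersRabbit
end

section
/- Let G be a finite simple connected graph that contains a clique C such that every vertex v ∈ C has at least one neighbour outside C. Then mh(G) ≥ |C|. -/
open SimpleGraph

namespace HuntersRabbit

universe u

variable {V : Type u}

-- auxiliary: every contaminated vertex is reached by a surviving trajectory
lemma exists_traj (G : SimpleGraph V) (S : List (Finset V)) :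
    ∀ n, ∀ x ∈ Zset G Set.univ S n, ∃ r : ℕ → V, r n = x ∧
      (∀ j, j < n → G.Adj (r j) (r (j + 1))) ∧ (∀ j, j < n → r j ∉ shots S j) := by
  intro n
  induction n with
  | zero => exact fun x _ => ⟨fun _ => x, rfl, fun j hj => by omega, fun j hj => by omega⟩
  | succ n ih =>
    intro x hx
    obtain ⟨y, hy, hyns, hadj⟩ := hx
    obtain ⟨r, hrn, hradj, hrns⟩ := ih y hy
    refine ⟨fun j => if j ≤ n then r j else x, by simp, ?_, ?_⟩
    · intro j hj
      rcases lt_or_eq_of_le (Nat.lt_succ_iff.mp hj) with h | h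
      · simpa [Nat.le_of_lt h, Nat.succ_le_of_lt h] using hradj j h
      · subst h
        simpa [hrn] using hadj
    · intro j hj
      rcases lt_or_eq_of_le (Nat.lt_succ_iff.mp hj) with h | h
      · simpa [Nat.le_of_lt h] using hrns j h
      · subst h; simpa [hrn] using hyns

lemma Z_lt_len (G : SimpleGraph V) (S : List (Finset V))
    (hwin : IsWinning G Set.univ S) :
    ∀ j, (Zset G Set.univ S j).Nonempty → j < S.length := by
  have hlen : Zset G Set.univ S S.length = ∅ := by
    ext x
    simp only [Set.mem_empty_iff_false, iff_false]
    intro hx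
    obtain ⟨r, _, hradj, hrns⟩ := exists_traj G S S.length x hx
    obtain ⟨j, hj, hmem⟩ := hwin r ⟨Set.mem_univ _, hradj⟩
    exact hrns j hj hmem
  have hprop : ∀ m, Zset G Set.univ S (S.length + m) = ∅ := by
    intro m
    induction m with
    | zero => exact hlen
    | succ m ih =>
      ext x
      simp only [Set.mem_empty_iff_false, iff_false]
      rintro ⟨y, hy, -, -⟩
      have hy' : y ∈ Zset G Set.univ S (S.length + m) := hy
      rw [ih] at hy'
      exact hy'
  intro j hj
  by_contra h
  have : Zset G Set.univ S (S.length + (j - S.length)) = ∅ := hprop _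
  rw [Nat.add_sub_cancel' (by omega)] at this
  obtain ⟨x, hx⟩ := hj
  rw [this] at hx
  exact hx

lemma main_lemma {V : Type} [Fintype V] (G : SimpleGraph V) (C : Finset V)
    (hC : G.IsClique (↑C : Set V))
    (hout : ∀ v ∈ C, ∃ u : V, u ∉ C ∧ G.Adj v u)
    (S : List (Finset V)) (k : ℕ)
    (hval : ValidStrategy S) (hwin : IsWinning G Set.univ S)
    (hmon : IsMonotoneStrat G Set.univ S) (huse : Uses S k) :
    C.card ≤ k := by
  classical
  by_contra hk'
  push_neg at hk'
  set Z := Zset G Set.univ S with hZdef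
  have hZ := Z_lt_len G S hwin
  set ℓ := S.length with hℓdef
  have hCne : C.Nonempty := Finset.card_pos.mp (by omega)
  obtain ⟨v₀, hv₀⟩ := hCne
  have hℓ1 : 1 ≤ ℓ := hZ 0 ⟨v₀, Set.mem_univ _⟩
  have hk1 : 1 ≤ k := by
    obtain ⟨s, hs⟩ := List.exists_mem_of_length_pos (by omega : 0 < S.length)
    have h1 := hval s hs
    have h2 := huse s hs
    have h3 := Finset.card_pos.mpr h1
    omega
  have hC2 : 2 ≤ C.card := by omega
  have hcard : ∀ j, j < ℓ → (shots S j).card ≤ k := by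
    intro j hj
    have h : shots S j = S[j] := List.getD_eq_getElem S ∅ hj
    rw [h]
    exact huse _ (List.getElem_mem hj)
  have hex : ∃ n, ¬ (∀ v ∈ C, v ∈ Z (n + 1)) := by
    refine ⟨ℓ - 1, fun h => ?_⟩
    have : ℓ - 1 + 1 < ℓ := hZ _ ⟨v₀, h v₀ hv₀⟩
    omega
  set i := Nat.find hex with hidef
  have hi : ¬ (∀ v ∈ C, v ∈ Z (i + 1)) := Nat.find_spec hex
  have hCZ : ∀ j, j ≤ i → ∀ v ∈ C, v ∈ Z j := by
    intro j hj
    match j with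
    | 0 => exact fun v _ => Set.mem_univ _
    | m + 1 => exact not_not.mp (Nat.find_min hex (by omega))
  have hiℓ : i < ℓ := hZ i ⟨v₀, hCZ i le_rfl v₀ hv₀⟩
  push_neg at hi
  obtain ⟨w, hwC, hw1⟩ := hi
  -- the shot at round i+1 is exactly C.erase w
  have hshot_i : shots S i = C.erase w := by
    refine (Finset.eq_of_subset_of_card_le ?_ ?_).symm
    · intro v hv
      obtain ⟨hvw, hvC⟩ := Finset.mem_erase.mp hv
      by_contra hns
      exact hw1 ⟨v, hCZ i le_rfl v hvC, hns, hC hvC hwC hvw⟩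
    · have := hcard i hiℓ
      have := Finset.card_erase_of_mem hwC
      omega
  have hw_ns : w ∉ shots S i := by
    rw [hshot_i]; simp
  have hNw : ∀ x, G.Adj w x → x ∈ Z (i + 1) :=
    fun x h => ⟨w, hCZ i le_rfl w hwC, hw_ns, h⟩
  have hE : ∀ v ∈ C.erase w, v ∈ Z (i + 1) := by
    intro v hv
    obtain ⟨hvw, hvC⟩ := Finset.mem_erase.mp hv
    exact hNw v (hC hwC hvC (Ne.symm hvw))
  have hne_erase : (C.erase w).Nonempty := by
    rw [← Finset.card_pos, Finset.card_erase_of_mem hwC]; omega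
  obtain ⟨v₁, hv₁⟩ := hne_erase
  have hi1ℓ : i + 1 < ℓ := hZ (i + 1) ⟨v₁, hE v₁ hv₁⟩
  have hclear : ∀ v ∈ C.erase w, ClearedAt G Set.univ S v i :=
    fun v hv => Or.inl (hshot_i ▸ hv)
  -- monotonicity forces the same shot forever
  have key : ∀ j, i < j → (∀ v ∈ C.erase w, v ∈ Z j) → shots S j = C.erase w := by
    intro j hij hsub
    have hjℓ : j < ℓ := hZ j ⟨v₁, hsub v₁ hv₁⟩
    refine (Finset.eq_of_subset_of_card_le ?_ ?_).symm
    · intro v hv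
      exact hmon v i j hiℓ hij hjℓ (hclear v hv) (hsub v hv)
    · have := hcard j hjℓ
      have := Finset.card_erase_of_mem hwC
      omega
  obtain ⟨u, huC, hwu⟩ := hout w hwC
  have huZ1 : u ∈ Z (i + 1) := hNw u hwu
  have hshot_i1 : shots S (i + 1) = C.erase w := key (i + 1) (by omega) hE
  by_cases hwZ1 : w ∈ Z (i + 1)
  · -- case A: contamination persists forever
    have inv : ∀ m, w ∈ Z (i + 1 + m) ∧ (∀ v ∈ C.erase w, v ∈ Z (i + 1 + m)) ∧
        u ∈ Z (i + 1 + m) := by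
      intro m
      induction m with
      | zero => exact ⟨hwZ1, hE, huZ1⟩
      | succ m ih =>
        obtain ⟨hw', hsub', hu'⟩ := ih
        set j := i + 1 + m with hjdef
        have hs : shots S j = C.erase w := key j (by omega) hsub'
        have hwns : w ∉ shots S j := by rw [hs]; simp
        have huns : u ∉ shots S j := by
          rw [hs]
          exact fun h => huC (Finset.mem_of_mem_erase h)
        have hj1 : i + 1 + (m + 1) = j + 1 := by omega
        rw [hj1]
        refine ⟨⟨u, hu', huns, hwu.symm⟩, ?_, ⟨w, hw', hwns, hwu⟩⟩
        intro v hv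
        obtain ⟨hvw, hvC⟩ := Finset.mem_erase.mp hv
        exact ⟨w, hw', hwns, hC hwC hvC (Ne.symm hvw)⟩
    have := hZ (i + 1 + ℓ) ⟨w, (inv ℓ).1⟩
    omega
  · -- case B: u was cleared earlier, monotonicity forces u to be shot, contradiction
    have huZi : u ∉ Z i := by
      intro h
      have huns : u ∉ shots S i := by
        rw [hshot_i]
        exact fun h' => huC (Finset.mem_of_mem_erase h')
      exact hwZ1 ⟨u, h, huns, hwu.symm⟩
    have hex2 : ∃ n, u ∉ Z n := ⟨i, huZi⟩
    set t := Nat.find hex2 with htdef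
    have ht : u ∉ Z t := Nat.find_spec hex2
    have hti : t ≤ i := Nat.find_min' hex2 huZi
    have ht1 : 1 ≤ t := by
      rcases Nat.eq_zero_or_pos t with h | h
      · exact absurd (h ▸ Set.mem_univ u : u ∈ Z t) ht
      · exact h
    obtain ⟨t', ht'⟩ : ∃ t', t = t' + 1 := ⟨t - 1, by omega⟩
    rw [ht'] at ht hti
    have hwt' : w ∈ Z t' := hCZ t' (by omega) w hwC
    have hcl : ClearedAt G Set.univ S u t' := by
      refine Or.inr ⟨⟨w, hwu.symm, hwt'⟩, ?_⟩
      intro y hy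
      obtain ⟨hyadj, hyZ⟩ := hy
      by_contra hyns
      exact ht ⟨y, hyZ, by simpa using hyns, (hyadj : G.Adj u y).symm⟩
    have := hmon u t' (i + 1) (by omega) (by omega) hi1ℓ hcl huZ1
    rw [hshot_i1] at this
    exact huC (Finset.mem_of_mem_erase this)


/-- If a finite simple connected graph `G` contains a clique `C` such that every
vertex of `C` has a neighbour outside `C`, then `mh(G) ≥ |C|`. -/
theorem clique_all_outside_neighbours_le_mhunterNum {V : Type} [Fintype V]
    (G : SimpleGraph V) (hG : G.Connected) (C : Finset V)
    (hC : G.IsClique (↑C : Set V))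
    (hout : ∀ v ∈ C, ∃ u : V, u ∉ C ∧ G.Adj v u) :
    C.card ≤ mhunterNum G := by
  rw [mhunterNum, mhunterNumW]
  split_ifs with h1
  · -- if |V| = 1 then C must be empty
    simp only [Nat.le_zero, Finset.card_eq_zero]
    by_contra hC0
    obtain ⟨v, hv⟩ := Finset.nonempty_iff_ne_empty.mpr hC0
    obtain ⟨u, -, hadj⟩ := hout v hv
    haveI : Nontrivial V := ⟨v, u, hadj.ne⟩
    rw [Nat.card_eq_fintype_card] at h1
    have := Fintype.one_lt_card (α := V)
    omega
  · rcases C.eq_empty_or_nonempty with h | h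
    · simp [h]
    · obtain ⟨v, hv⟩ := h
      haveI : Nonempty V := ⟨v⟩
      refine le_csInf ⟨Fintype.card V, [Finset.univ], ?_, ?_, ?_, ?_⟩ ?_
      · intro s hs
        simp only [List.mem_singleton] at hs
        subst hs
        exact Finset.univ_nonempty
      · intro r hr
        exact ⟨0, by simp, by simp [shots]⟩
      · intro x i j hi hij hj _ _
        simp only [List.length_singleton] at hi hj
        omega
      · intro s hs
        simp only [List.mem_singleton] at hs
        subst hs
        simp
      · rintro k ⟨S, hv1, hv2, hv3, hv4⟩
        exact main_lemma G C hC hout S k hv1 hv2 hv3 hv4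

end HuntersRabbit
end
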